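/- arXiv:2603.21532 — 5 statements merged into one kernel-verified Lean document; each statement's English description precedes it below -/
import Mathlib

section
/- Let S be a random subset of a finite set E satisfying, for some caps q ∈ [0,1]^E: for every e ∈ E and every U ⊆ E∖{e} with P[S∖{e} = U] > 0, P[e ∈ S | S∖{e} = U] ≤ q_e. Let (C_e)_{e∈E} be independent Bernoulli variables with P[C_e = 1] = s_e ∈ [0,1], independent of S, and let R = {e ∈ S : C_e = 1}. Then for every e ∈ E, P[e ∈ R] = s_e · P[e ∈ S], and for every e ∈ E and every T ⊆ E∖{e} with P[R∖{e} = T] > 0, P[e ∈ R | R∖{e} = T] ≤ s_e · q_e. -/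
open Finset

/-!
Write `K(A, T)` (`thinningKernel s A T`) for the probability that the `s`-thinning of the fixed set `A` is `T`.
Pairing every set `B ∌ e` with `insert e B`, one has `K(B+e, T+e) = s_e K(B, T)`,
`K(B+e, T) = (1 - s_e) K(B, T)` and `K(B, T+e) = 0` for `e ∉ B, T`. Hence
`P[R = T+e] = s_e ∑_B P[S = B+e] K(B, T)` and `P[R = T] + P[R = T+e] = ∑_B P[S∖{e} = B] K(B, T)`,
so the cap `P[S = B+e] ≤ q_e P[S∖{e} = B]` transfers termwise to `R` with the extra factor `s_e`.
Summing the first identity over `T` gives the marginal `P[e ∈ R] = s_e P[e ∈ S]`.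
-/

namespace Finset

variable {α M : Type*} [Fintype α] [DecidableEq α] [AddCommMonoid M]

theorem sum_filter_mem_eq_sum_filter_notMem_insert (a : α) (f : Finset α → M) :
    ∑ A with a ∈ A, f A = ∑ B with a ∉ B, f (insert a B) :=
  sum_nbij' (·.erase a) (insert a) (by simp) (by simp) (by simp +contextual [insert_erase])
    (by simp +contextual) (by simp +contextual [insert_erase])

theorem sum_finset_eq_sum_filter_notMem_add_insert (a : α) (f : Finset α → M) :
    ∑ A, f A = ∑ B with a ∉ B, (f B + f (insert a B)) := by
  rw [← sum_filter_add_sum_filter_not univ (a ∈ ·), sum_filter_mem_eq_sum_filter_notMem_insert,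
    add_comm, sum_add_distrib]

end Finset

theorem le_mul_add_of_div_add_le {a b q : ℝ} (ha : 0 ≤ a) (hb : 0 ≤ b)
    (h : 0 < b + a → a / (b + a) ≤ q) : a ≤ q * (b + a) := by
  rcases (add_nonneg hb ha).lt_or_eq with hpos | hzero
  · exact (div_le_iff₀ hpos).1 (h hpos)
  · obtain rfl : a = 0 := by linarith
    obtain rfl : b = 0 := by linarith
    simp

section Thinning

variable {E : Type*} [DecidableEq E]

noncomputable def thinningKernel (s : E → ℝ) (A T : Finset E) : ℝ :=
  if T ⊆ A then (∏ e ∈ T, s e) * ∏ e ∈ A \ T, (1 - s e) else 0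

variable {s : E → ℝ} {e : E} {A T : Finset E}

theorem thinningKernel_nonneg (hs : ∀ e, 0 ≤ s e ∧ s e ≤ 1) (A T : Finset E) :
    0 ≤ thinningKernel s A T := by
  unfold thinningKernel
  split_ifs
  · exact mul_nonneg (prod_nonneg fun f _ => (hs f).1)
      (prod_nonneg fun f _ => sub_nonneg.2 (hs f).2)
  · exact le_rfl

theorem thinningKernel_insert_insert (heA : e ∉ A) (heT : e ∉ T) :
    thinningKernel s (insert e A) (insert e T) = s e * thinningKernel s A T := by
  simp only [thinningKernel, insert_subset_insert_iff heT, insert_sdiff_insert,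
    sdiff_insert_of_notMem heA, prod_insert heT, mul_ite, mul_zero, mul_assoc]

theorem thinningKernel_insert_left (heA : e ∉ A) (heT : e ∉ T) :
    thinningKernel s (insert e A) T = (1 - s e) * thinningKernel s A T := by
  have he : e ∉ A \ T := fun h => heA (mem_sdiff.1 h).1
  simp only [thinningKernel, subset_insert_iff_of_notMem heT, insert_sdiff_of_notMem _ heT,
    prod_insert he, mul_ite, mul_zero]
  split_ifs <;> ring

theorem thinningKernel_insert_right (heA : e ∉ A) (T : Finset E) :
    thinningKernel s A (insert e T) = 0 :=
  if_neg fun h => heA (h (mem_insert_self e T))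

variable [Fintype E]

theorem sum_thinningKernel (s : E → ℝ) (A : Finset E) : ∑ T, thinningKernel s A T = 1 := by
  have hpow : ({T | T ⊆ A} : Finset (Finset E)) = A.powerset := by ext; simp
  simp only [thinningKernel]
  rw [← sum_filter, hpow, ← prod_add]
  simp

noncomputable def thinning (s : E → ℝ) (μ : Finset E → ℝ) (T : Finset E) : ℝ :=
  ∑ A, μ A * thinningKernel s A T

theorem thinning_eq_sum_filter (s : E → ℝ) (μ : Finset E → ℝ) (T : Finset E) :
    thinning s μ T = ∑ A with T ⊆ A, μ A * ((∏ e ∈ T, s e) * ∏ e ∈ A \ T, (1 - s e)) := by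
  simp only [thinning, thinningKernel, mul_ite, mul_zero, sum_filter]

variable (s) (μ : Finset E → ℝ)

theorem thinning_insert (heT : e ∉ T) :
    thinning s μ (insert e T) = s e * ∑ B with e ∉ B, μ (insert e B) * thinningKernel s B T := by
  rw [thinning, sum_finset_eq_sum_filter_notMem_add_insert e, mul_sum]
  refine sum_congr rfl fun B hB => ?_
  have heB : e ∉ B := (mem_filter.1 hB).2
  rw [thinningKernel_insert_right heB, thinningKernel_insert_insert heB heT]
  ring

theorem thinning_add_thinning_insert (heT : e ∉ T) :
    thinning s μ T + thinning s μ (insert e T) =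
      ∑ B with e ∉ B, (μ B + μ (insert e B)) * thinningKernel s B T := by
  rw [thinning_insert s μ heT, thinning, sum_finset_eq_sum_filter_notMem_add_insert e, mul_sum,
    ← sum_add_distrib]
  refine sum_congr rfl fun B hB => ?_
  rw [thinningKernel_insert_left (mem_filter.1 hB).2 heT]
  ring

theorem sum_filter_mem_thinning (e : E) :
    ∑ T with e ∈ T, thinning s μ T = s e * ∑ A with e ∈ A, μ A := by
  have hmass (B : Finset E) (heB : e ∉ B) : ∑ U with e ∉ U, thinningKernel s B U = 1 := by
    rw [sum_filter_of_ne, sum_thinningKernel]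
    exact fun U _ hU heU => hU (if_neg fun h => heB (h heU))
  calc ∑ T with e ∈ T, thinning s μ T
      = ∑ U with e ∉ U, s e * ∑ B with e ∉ B, μ (insert e B) * thinningKernel s B U := by
        rw [sum_filter_mem_eq_sum_filter_notMem_insert]
        exact sum_congr rfl fun U hU => thinning_insert s μ (mem_filter.1 hU).2
    _ = s e * ∑ B with e ∉ B, μ (insert e B) * ∑ U with e ∉ U, thinningKernel s B U := by
        rw [← mul_sum, sum_comm]
        simp only [mul_sum]
    _ = s e * ∑ A with e ∈ A, μ A := by
        rw [sum_filter_mem_eq_sum_filter_notMem_insert]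
        congr 1
        exact sum_congr rfl fun B hB => by rw [hmass B (mem_filter.1 hB).2, mul_one]

theorem thinning_insert_le {q : ℝ} (hs : ∀ e, 0 ≤ s e ∧ s e ≤ 1)
    (hcap : ∀ U, e ∉ U → μ (insert e U) ≤ q * (μ U + μ (insert e U))) (heT : e ∉ T) :
    thinning s μ (insert e T) ≤ s e * q * (thinning s μ T + thinning s μ (insert e T)) := by
  rw [thinning_add_thinning_insert s μ heT, thinning_insert s μ heT, mul_assoc]
  refine mul_le_mul_of_nonneg_left ?_ (hs e).1
  rw [mul_sum]
  refine sum_le_sum fun B hB => ?_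
  rw [← mul_assoc]
  exact mul_le_mul_of_nonneg_right (hcap B (mem_filter.1 hB).2) (thinningKernel_nonneg hs B T)

end Thinning

theorem stmt_14_general {E : Type*} [Fintype E] [DecidableEq E]
    -- μ is the law of the random subset S of E
    (μ : Finset E → ℝ)
    (h0 : ∀ A, 0 ≤ μ A)
    -- caps q: P[e ∈ S | S∖{e} = U] ≤ q_e
    (q : E → ℝ)
    (hcap : ∀ e : E, ∀ U : Finset E, e ∉ U → 0 < μ U + μ (insert e U) →
      μ (insert e U) / (μ U + μ (insert e U)) ≤ q e)
    -- retention probabilities s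
    (s : E → ℝ) (hs : ∀ e, 0 ≤ s e ∧ s e ≤ 1)
    -- ν is the law of R = {e ∈ S : C_e = 1}, the independent s-thinning of S
    (ν : Finset E → ℝ)
    (hν : ∀ T : Finset E, ν T = ∑ A ∈ univ.filter (fun A => T ⊆ A),
        μ A * ((∏ e ∈ T, s e) * ∏ e ∈ A \ T, (1 - s e))) :
    -- P[e ∈ R] = s_e · P[e ∈ S]
    (∀ e, ∑ T ∈ univ.filter (fun T => e ∈ T), ν T =
        s e * ∑ A ∈ univ.filter (fun A => e ∈ A), μ A) ∧
    -- P[e ∈ R | R∖{e} = T] ≤ s_e · q_e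
    (∀ e : E, ∀ T : Finset E, e ∉ T → 0 < ν T + ν (insert e T) →
      ν (insert e T) / (ν T + ν (insert e T)) ≤ s e * q e) := by
  obtain rfl : ν = thinning s μ := funext fun T => (hν T).trans (thinning_eq_sum_filter s μ T).symm
  refine ⟨sum_filter_mem_thinning s μ, fun e T heT hpos => ?_⟩
  rw [div_le_iff₀ hpos]
  exact thinning_insert_le s μ hs
    (fun U heU => le_mul_add_of_div_add_le (h0 _) (h0 _) (hcap e U heU)) heT

theorem stmt_14 {E : Type*} [Fintype E] [DecidableEq E]
    -- μ is the law of the random subset S of E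
    (μ : Finset E → ℝ)
    (h0 : ∀ A, 0 ≤ μ A)
    (hsum : (∑ A : Finset E, μ A) = 1)
    -- caps q: P[e ∈ S | S∖{e} = U] ≤ q_e
    (q : E → ℝ) (hq : ∀ e, 0 ≤ q e ∧ q e ≤ 1)
    (hcap : ∀ e : E, ∀ U : Finset E, e ∉ U → 0 < μ U + μ (insert e U) →
      μ (insert e U) / (μ U + μ (insert e U)) ≤ q e)
    -- retention probabilities s
    (s : E → ℝ) (hs : ∀ e, 0 ≤ s e ∧ s e ≤ 1)
    -- ν is the law of R = {e ∈ S : C_e = 1}, the independent s-thinning of S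
    (ν : Finset E → ℝ)
    (hν : ∀ T : Finset E, ν T = ∑ A ∈ univ.filter (fun A => T ⊆ A),
        μ A * ((∏ e ∈ T, s e) * ∏ e ∈ A \ T, (1 - s e))) :
    -- P[e ∈ R] = s_e · P[e ∈ S]
    (∀ e, ∑ T ∈ univ.filter (fun T => e ∈ T), ν T =
        s e * ∑ A ∈ univ.filter (fun A => e ∈ A), μ A) ∧
    -- P[e ∈ R | R∖{e} = T] ≤ s_e · q_e
    (∀ e : E, ∀ T : Finset E, e ∉ T → 0 < ν T + ν (insert e T) →
      ν (insert e T) / (ν T + ν (insert e T)) ≤ s e * q e) :=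
  stmt_14_general μ h0 q hcap s hs ν hν
end

section
/- Let μ0 be a probability measure on subsets of a finite set E. Then μ0 is Rayleigh if and only if every tilted measure of μ0 satisfies pairwise negative correlation: for every weight vector w ∈ (0,∞)^E and every pair of distinct elements e, f ∈ E, P_{B∼μ_w}[e ∈ B] · P_{B∼μ_w}[f ∈ B] ≥ P_{B∼μ_w}[{e, f} ⊆ B], where μ_w(A) ∝ μ0(A)·∏_{g∈A} w_g. -/
open Finset

/-- Probability of the event `P` under the tilt of the measure `μ` by the weight vector `w`:
`μ_w(A) ∝ μ(A) · ∏_{e∈A} w_e`. -/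
noncomputable def tiltProb {E : Type*} [Fintype E] [DecidableEq E]
    (μ : Finset E → ℝ) (w : E → ℝ) (P : Finset E → Prop) [DecidablePred P] : ℝ :=
  (∑ A ∈ univ.filter P, μ A * ∏ e ∈ A, w e) / (∑ A : Finset E, μ A * ∏ e ∈ A, w e)

/-- `μ` is Rayleigh: every positive tilt of `μ` satisfies the Rayleigh inequality
`P[T ⊆ B] · P[e ∈ B] ≥ P[T ∪ {e} ⊆ B]`. -/
def IsRayleigh {E : Type*} [Fintype E] [DecidableEq E] (μ : Finset E → ℝ) : Prop :=
  ∀ w : E → ℝ, (∀ e, 0 < w e) → ∀ e : E, ∀ T : Finset E, e ∉ T →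
    tiltProb μ w (fun A => insert e T ⊆ A) ≤
      tiltProb μ w (fun A => T ⊆ A) * tiltProb μ w (fun A => e ∈ A)

namespace Stmt16


variable {E : Type*} [Fintype E] [DecidableEq E]

noncomputable def Zf (μ : Finset E → ℝ) (w : E → ℝ) (S : Finset E) : ℝ :=
  ∑ A ∈ univ.filter (fun A => S ⊆ A), μ A * ∏ e ∈ A, w e

noncomputable def ZP (μ : Finset E → ℝ) (w : E → ℝ) (f : E) (S : Finset E) : ℝ :=
  ∑ A ∈ univ.filter (fun A => S ⊆ A ∧ f ∉ A), μ A * ∏ h ∈ A, w h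

noncomputable def ZQ (μ : Finset E → ℝ) (w : E → ℝ) (f : E) (S : Finset E) : ℝ :=
  ∑ A ∈ univ.filter (fun A => S ⊆ A ∧ f ∈ A), μ A * ∏ h ∈ A.erase f, w h

lemma Zf_nonneg (μ : Finset E → ℝ) (hμ : ∀ A, 0 ≤ μ A) (w : E → ℝ) (hw : ∀ x, 0 < w x)
    (S : Finset E) : 0 ≤ Zf μ w S :=
  Finset.sum_nonneg fun A _ => mul_nonneg (hμ A) (Finset.prod_nonneg fun h _ => (hw h).le)

lemma ZP_nonneg (μ : Finset E → ℝ) (hμ : ∀ A, 0 ≤ μ A) (w : E → ℝ) (hw : ∀ x, 0 < w x)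
    (f : E) (S : Finset E) : 0 ≤ ZP μ w f S :=
  Finset.sum_nonneg fun A _ => mul_nonneg (hμ A) (Finset.prod_nonneg fun h _ => (hw h).le)

lemma ZQ_nonneg (μ : Finset E → ℝ) (hμ : ∀ A, 0 ≤ μ A) (w : E → ℝ) (hw : ∀ x, 0 < w x)
    (f : E) (S : Finset E) : 0 ≤ ZQ μ w f S :=
  Finset.sum_nonneg fun A _ => mul_nonneg (hμ A) (Finset.prod_nonneg fun h _ => (hw h).le)

lemma Zf_mono (μ : Finset E → ℝ) (hμ : ∀ A, 0 ≤ μ A) (w : E → ℝ) (hw : ∀ x, 0 < w x)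
    {S S' : Finset E} (hSS : S ⊆ S') : Zf μ w S' ≤ Zf μ w S := by
  apply Finset.sum_le_sum_of_subset_of_nonneg
  · intro A hA
    simp only [Finset.mem_filter] at *
    exact ⟨hA.1, hSS.trans hA.2⟩
  · intro A _ _
    exact mul_nonneg (hμ A) (Finset.prod_nonneg fun h _ => (hw h).le)

lemma Zf_insert (μ : Finset E → ℝ) (w : E → ℝ) (f : E) (S : Finset E) :
    Zf μ w (insert f S) = w f * ZQ μ w f S := by
  unfold Zf ZQ
  rw [Finset.mul_sum]
  rw [show (univ.filter fun A : Finset E => insert f S ⊆ A)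
        = univ.filter (fun A => S ⊆ A ∧ f ∈ A) from by
    apply Finset.filter_congr; intro A _; simp [Finset.insert_subset_iff, and_comm]]
  apply Finset.sum_congr rfl
  intro A hA
  simp only [Finset.mem_filter] at hA
  rw [← Finset.mul_prod_erase A w hA.2.2]
  ring

lemma Zf_update (μ : Finset E → ℝ) (w : E → ℝ) (f : E) (t : ℝ) (S : Finset E) :
    Zf μ (Function.update w f t) S = ZP μ w f S + t * ZQ μ w f S := by
  unfold Zf ZP ZQ
  rw [← Finset.sum_filter_add_sum_filter_not (univ.filter fun A : Finset E => S ⊆ A)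
        (fun A => f ∉ A)]
  have h1 : (univ.filter fun A : Finset E => S ⊆ A).filter (fun A => f ∉ A)
      = univ.filter (fun A => S ⊆ A ∧ f ∉ A) := by rw [Finset.filter_filter]
  have h2 : (univ.filter fun A : Finset E => S ⊆ A).filter (fun A => ¬ f ∉ A)
      = univ.filter (fun A => S ⊆ A ∧ f ∈ A) := by
    rw [Finset.filter_filter]; apply Finset.filter_congr; intro A _; simp
  rw [h1, h2, Finset.mul_sum]
  congr 1
  · apply Finset.sum_congr rfl
    intro A hA
    simp only [Finset.mem_filter] at hA
    congr 1
    apply Finset.prod_congr rfl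
    intro h hh
    exact Function.update_of_ne (by rintro rfl; exact hA.2.2 hh) _ _
  · apply Finset.sum_congr rfl
    intro A hA
    simp only [Finset.mem_filter] at hA
    rw [← Finset.mul_prod_erase A _ hA.2.2, Function.update_self]
    rw [show ∏ h ∈ A.erase f, Function.update w f t h = ∏ h ∈ A.erase f, w h from
      Finset.prod_congr rfl fun h hh =>
        Function.update_of_ne (Finset.ne_of_mem_erase hh) _ _]
    ring

lemma Zf_cond (μ : Finset E → ℝ) (w : E → ℝ) (f : E) (S : Finset E) :
    Zf (fun A => if f ∈ A then μ A else 0) w S = Zf μ w (insert f S) := by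
  unfold Zf
  rw [show (univ.filter fun A : Finset E => insert f S ⊆ A)
        = (univ.filter fun A : Finset E => S ⊆ A).filter (fun A => f ∈ A) from by
    rw [Finset.filter_filter]
    apply Finset.filter_congr; intro A _; simp [Finset.insert_subset_iff, and_comm]]
  rw [Finset.sum_filter (fun A => f ∈ A) (fun A => μ A * ∏ e ∈ A, w e)]
  apply Finset.sum_congr rfl
  intro A _
  by_cases h : f ∈ A <;> simp [h]



set_option maxHeartbeats 1000000 in
lemma pair_cond (μ : Finset E → ℝ) (hμ : ∀ A, 0 ≤ μ A)
    (H : ∀ w : E → ℝ, (∀ x, 0 < w x) → ∀ e g : E, e ≠ g →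
      Zf μ w {e, g} * Zf μ w ∅ ≤ Zf μ w {e} * Zf μ w {g})
    (w : E → ℝ) (hw : ∀ x, 0 < w x) (f e g : E) (heg : e ≠ g) :
    Zf μ w (insert f {e, g}) * Zf μ w (insert f ∅) ≤
      Zf μ w (insert f {e}) * Zf μ w (insert f {g}) := by
  by_cases hfe : f = e
  · subst hfe
    rw [show insert f ({f, g} : Finset E) = ({f, g} : Finset E) from by ext x; simp,
        show insert f ({f} : Finset E) = ({f} : Finset E) from by ext x; simp,
        show (insert f (∅ : Finset E)) = ({f} : Finset E) from by ext x; simp,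
        show insert f ({g} : Finset E) = ({f, g} : Finset E) from by ext x; simp; try tauto]
    try exact le_of_eq (mul_comm _ _)
  by_cases hfg : f = g
  · subst hfg
    rw [show insert f ({e, f} : Finset E) = ({e, f} : Finset E) from by ext x; simp; try tauto,
        show insert f ({f} : Finset E) = ({f} : Finset E) from by ext x; simp,
        show insert f ({e} : Finset E) = ({e, f} : Finset E) from by ext x; simp; try tauto,
        show (insert f (∅ : Finset E)) = ({f} : Finset E) from by ext x; simp]
    try exact le_of_eq (mul_comm _ _)
  -- main case: e, g, f pairwise distinct
  · rw [Zf_insert, Zf_insert, Zf_insert, Zf_insert]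
    set q1 := ZQ μ w f {e, g} with hq1d
    set q2 := ZQ μ w f ∅ with hq2d
    set q3 := ZQ μ w f {e} with hq3d
    set q4 := ZQ μ w f {g} with hq4d
    have hq1 : 0 ≤ q1 := ZQ_nonneg μ hμ w hw f _
    have hq2 : 0 ≤ q2 := ZQ_nonneg μ hμ w hw f _
    have hq3 : 0 ≤ q3 := ZQ_nonneg μ hμ w hw f _
    have hq4 : 0 ≤ q4 := ZQ_nonneg μ hμ w hw f _
    have key : q1 * q2 ≤ q3 * q4 := by
      by_contra hcon
      push_neg at hcon
      set p1 := ZP μ w f {e, g} with hp1d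
      set p2 := ZP μ w f ∅ with hp2d
      set p3 := ZP μ w f {e} with hp3d
      set p4 := ZP μ w f {g} with hp4d
      have hp1 : 0 ≤ p1 := ZP_nonneg μ hμ w hw f _
      have hp2 : 0 ≤ p2 := ZP_nonneg μ hμ w hw f _
      have hp3 : 0 ≤ p3 := ZP_nonneg μ hμ w hw f _
      have hp4 : 0 ≤ p4 := ZP_nonneg μ hμ w hw f _
      have hδ : (0:ℝ) < q1 * q2 - q3 * q4 := by linarith
      set t := max 1 ((p3 * p4 + p3 * q4 + q3 * p4 + 1) / (q1 * q2 - q3 * q4)) with htd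
      have ht1 : (1 : ℝ) ≤ t := le_max_left _ _
      have ht : (0:ℝ) < t := lt_of_lt_of_le one_pos ht1
      have hKt : p3 * p4 + p3 * q4 + q3 * p4 + 1 ≤ t * (q1 * q2 - q3 * q4) := by
        rw [← div_le_iff₀ hδ]
        exact le_max_right _ _
      have hw' : ∀ x, 0 < Function.update w f t x := by
        intro x
        by_cases hx : x = f
        · subst hx; rw [Function.update_self]; exact ht
        · rw [Function.update_of_ne hx]; exact hw x
      have H' := H (Function.update w f t) hw' e g heg
      rw [Zf_update, Zf_update, Zf_update, Zf_update] at H'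
      simp only [← hp1d, ← hp2d, ← hp3d, ← hp4d, ← hq1d, ← hq2d, ← hq3d, ← hq4d] at H'
      have e2 : t * (p3 * p4 + p3 * q4 + q3 * p4 + 1) ≤ t * (t * (q1 * q2 - q3 * q4)) :=
        mul_le_mul_of_nonneg_left hKt ht.le
      nlinarith [H', e2, mul_nonneg hp1 hp2, mul_nonneg (mul_nonneg ht.le hp1) hq2,
        mul_nonneg (mul_nonneg ht.le hq1) hp2,
        mul_le_mul_of_nonneg_right ht1 (mul_nonneg hp3 hp4), ht, ht1]
    have hwf := hw f
    nlinarith [mul_le_mul_of_nonneg_left key (mul_pos hwf hwf).le]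


lemma mainZ (T : Finset E) :
    ∀ (μ : Finset E → ℝ), (∀ A, 0 ≤ μ A) →
    (∀ w : E → ℝ, (∀ x, 0 < w x) → ∀ e g : E, e ≠ g →
      Zf μ w {e, g} * Zf μ w ∅ ≤ Zf μ w {e} * Zf μ w {g}) →
    ∀ w : E → ℝ, (∀ x, 0 < w x) → ∀ e : E, e ∉ T →
      Zf μ w (insert e T) * Zf μ w ∅ ≤ Zf μ w T * Zf μ w {e} := by
  refine Finset.induction_on T ?_ ?_
  · intro μ hμ H w hw e _
    rw [show insert e (∅ : Finset E) = ({e} : Finset E) from by ext x; simp]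
    exact le_of_eq (mul_comm _ _)
  · intro f s hf ih μ hμ H w hw e he
    simp only [Finset.mem_insert, not_or] at he
    obtain ⟨hef, hes⟩ := he
    have hμ1n : ∀ A, 0 ≤ (fun A => if f ∈ A then μ A else 0) A := by
      intro A; by_cases h : f ∈ A <;> simp [h, hμ A]
    have hμ1p : ∀ w' : E → ℝ, (∀ x, 0 < w' x) → ∀ e' g' : E, e' ≠ g' →
        Zf (fun A => if f ∈ A then μ A else 0) w' {e', g'} *
          Zf (fun A => if f ∈ A then μ A else 0) w' ∅ ≤
        Zf (fun A => if f ∈ A then μ A else 0) w' {e'} *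
          Zf (fun A => if f ∈ A then μ A else 0) w' {g'} := by
      intro w' hw' e' g' he'g'
      rw [Zf_cond, Zf_cond, Zf_cond, Zf_cond]
      exact pair_cond μ hμ H w' hw' f e' g' he'g'
    have IH := ih (fun A => if f ∈ A then μ A else 0) hμ1n hμ1p w hw e hes
    rw [Zf_cond, Zf_cond, Zf_cond, Zf_cond] at IH
    rw [show insert f (insert e s) = insert e (insert f s) from Finset.insert_comm .. ,
        show insert f (∅ : Finset E) = ({f} : Finset E) from by ext x; simp,
        show insert f ({e} : Finset E) = ({e, f} : Finset E) from by ext x; simp; tauto] at IH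
    have hP := H w hw e f hef
    have hz := Zf_nonneg μ hμ w hw ∅
    have hb := Zf_nonneg μ hμ w hw (insert f s)
    have hc := Zf_nonneg μ hμ w hw {e}
    have hzf := Zf_nonneg μ hμ w hw {f}
    rcases eq_or_lt_of_le hzf with hzf0 | hzfp
    · have ha : Zf μ w (insert e (insert f s)) ≤ Zf μ w {f} :=
        Zf_mono μ hμ w hw (by simp)
      have ha0 : Zf μ w (insert e (insert f s)) = 0 :=
        le_antisymm (by rw [← hzf0] at ha; exact ha) (Zf_nonneg μ hμ w hw _)
      rw [ha0, zero_mul]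
      positivity
    · refine le_of_mul_le_mul_right ?_ hzfp
      have h1 := mul_le_mul_of_nonneg_right IH hz
      have h2 := mul_le_mul_of_nonneg_left hP hb
      nlinarith [h1, h2]


lemma tiltZ (μ : Finset E → ℝ) (w : E → ℝ) (P : Finset E → Prop) [DecidablePred P]
    (S : Finset E) (h : ∀ A, P A ↔ S ⊆ A) :
    tiltProb μ w P = Zf μ w S / Zf μ w ∅ := by
  unfold tiltProb Zf
  congr 1
  · refine Finset.sum_congr ?_ fun _ _ => rfl
    ext A; simp [h A]
  · rw [show (univ.filter fun A : Finset E => (∅ : Finset E) ⊆ A) = univ from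
      Finset.filter_true_of_mem fun _ _ => Finset.empty_subset _]

lemma Zpos (μ : Finset E → ℝ) (hμ : ∀ A, 0 ≤ μ A) (hsum : (∑ A : Finset E, μ A) = 1)
    (w : E → ℝ) (hw : ∀ x, 0 < w x) : 0 < Zf μ w ∅ := by
  rcases (Zf_nonneg μ hμ w hw ∅).lt_or_eq with h | h
  · exact h
  · exfalso
    have h0 := (Finset.sum_eq_zero_iff_of_nonneg
      (fun A _ => mul_nonneg (hμ A) (Finset.prod_nonneg fun x _ => (hw x).le))).mp h.symm
    have hzero : (∑ A : Finset E, μ A) = 0 := Finset.sum_eq_zero fun A _ => by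
      have hA := h0 A (by simp)
      rcases mul_eq_zero.mp hA with h1 | h1
      · exact h1
      · exact absurd h1 (ne_of_gt (Finset.prod_pos fun x _ => hw x))
    rw [hsum] at hzero
    norm_num at hzero

end Stmt16

open Stmt16 in
theorem stmt_16 {E : Type*} [Fintype E] [DecidableEq E]
    -- μ0 is a probability measure on the subsets of E
    (μ0 : Finset E → ℝ)
    (h0 : ∀ A, 0 ≤ μ0 A)
    (hsum : (∑ A : Finset E, μ0 A) = 1) :
    -- Rayleigh ⟺ pairwise negative correlation under all tilts
    IsRayleigh μ0 ↔
      ∀ w : E → ℝ, (∀ e, 0 < w e) → ∀ e f : E, e ≠ f →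
        tiltProb μ0 w (fun A => ({e, f} : Finset E) ⊆ A) ≤
          tiltProb μ0 w (fun A => e ∈ A) * tiltProb μ0 w (fun A => f ∈ A) := by
  constructor
  · intro hR w hw e f hef
    have h1 := hR w hw e {f} (by simp [hef])
    rw [tiltZ μ0 w _ ({e, f} : Finset E) (fun A => Iff.rfl),
        tiltZ μ0 w _ ({e} : Finset E) (fun A => Finset.singleton_subset_iff.symm),
        tiltZ μ0 w _ ({f} : Finset E) (fun A => Finset.singleton_subset_iff.symm)]
    rw [tiltZ μ0 w _ ({e, f} : Finset E) (fun A => Iff.rfl),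
        tiltZ μ0 w _ ({f} : Finset E) (fun A => Iff.rfl),
        tiltZ μ0 w _ ({e} : Finset E) (fun A => Finset.singleton_subset_iff.symm)] at h1
    rw [mul_comm]
    exact h1
  · intro Hp w hw e T heT
    have HZ : ∀ w' : E → ℝ, (∀ x, 0 < w' x) → ∀ e' g' : E, e' ≠ g' →
        Zf μ0 w' {e', g'} * Zf μ0 w' ∅ ≤ Zf μ0 w' {e'} * Zf μ0 w' {g'} := by
      intro w' hw' e' g' h
      have hz' := Zpos μ0 h0 hsum w' hw'
      have hp := Hp w' hw' e' g' h
      rw [tiltZ μ0 w' _ ({e', g'} : Finset E) (fun A => Iff.rfl),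
          tiltZ μ0 w' _ ({e'} : Finset E) (fun A => Finset.singleton_subset_iff.symm),
          tiltZ μ0 w' _ ({g'} : Finset E) (fun A => Finset.singleton_subset_iff.symm)] at hp
      rw [div_mul_div_comm, div_le_div_iff₀ hz' (mul_pos hz' hz')] at hp
      refine le_of_mul_le_mul_right ?_ hz'
      nlinarith [hp]
    have key := mainZ T μ0 h0 HZ w hw e heT
    have hz := Zpos μ0 h0 hsum w hw
    rw [tiltZ μ0 w _ (insert e T) (fun A => Iff.rfl),
        tiltZ μ0 w _ T (fun A => Iff.rfl),
        tiltZ μ0 w _ ({e} : Finset E) (fun A => Finset.singleton_subset_iff.symm)]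
    rw [div_mul_div_comm, div_le_div_iff₀ hz (mul_pos hz hz)]
    nlinarith [mul_le_mul_of_nonneg_right key hz.le]
end

section
/- Let M be a finite matroid on ground set E with set of bases B, and let μ be a full-support Rayleigh probability measure on B (so M is weakly Rayleigh with witness μ). Let A ⊆ E and distinct elements i, j, k, ℓ ∈ E∖A be such that B1 = A∪{i,k}, B2 = A∪{i,ℓ}, B3 = A∪{j,ℓ}, B4 = A∪{j,k} are all bases of M, and at most one of A∪{i,j} and A∪{k,ℓ} is a basis (a degenerate quadrangle). Then μ(B1)·μ(B3) = μ(B2)·μ(B4). -/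
/-!
By symmetry of the hypotheses under `(i, j) ↔ (k, l)` we may assume that `A ∪ {i, j}` is not a
basis. Grade `E` so that the four bases of the quadrangle are exactly the bases of lowest degree.
Tilting `μ` by `ε ^ deg` and letting `ε → 0⁺` shows that the restriction `ν` of `μ` to these four
bases is again Rayleigh. With `μ₁, …, μ₄` the masses of
`A ∪ {i,k}, A ∪ {i,l}, A ∪ {j,l}, A ∪ {j,k}`, the Rayleigh inequality of `ν` for `e = i`,
`T = {k}` reads `μ₁ (μ₁ + μ₂ + μ₃ + μ₄) ≤ (μ₁ + μ₄) (μ₁ + μ₂)`, that is `μ₁ μ₃ ≤ μ₂ μ₄`;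
exchanging `k` and `l` gives the reverse inequality.
-/

open Finset

/-- A matroid on a finite ground set `E`, given by its independent sets. -/
structure FinMatroid (E : Type*) [Fintype E] [DecidableEq E] where
  Indep : Finset E → Prop
  indep_empty : Indep ∅
  indep_subset : ∀ ⦃S T : Finset E⦄, Indep T → S ⊆ T → Indep S
  indep_exchange : ∀ ⦃S T : Finset E⦄, Indep S → Indep T → S.card < T.card →
    ∃ e ∈ T \ S, Indep (insert e S)

/-- A base of the matroid: a maximal independent set. -/
def FinMatroid.IsBase {E : Type*} [Fintype E] [DecidableEq E]
    (M : FinMatroid E) (B : Finset E) : Prop :=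
  M.Indep B ∧ ∀ e ∉ B, ¬ M.Indep (insert e B)

section

variable {E : Type*}

theorem FinMatroid.IsBase.card_eq [Fintype E] [DecidableEq E] {M : FinMatroid E}
    {B C : Finset E} (hB : M.IsBase B) (hC : M.IsBase C) : #B = #C := by
  by_contra hne
  rcases Nat.lt_or_gt_of_ne hne with h | h
  · obtain ⟨e, he, hind⟩ := M.indep_exchange hB.1 hC.1 h
    exact hB.2 e (mem_sdiff.1 he).2 hind
  · obtain ⟨e, he, hind⟩ := M.indep_exchange hC.1 hB.1 h
    exact hC.2 e (mem_sdiff.1 he).2 hind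

def tiltMass (μ : Finset E → ℝ) (w : E → ℝ) (s : Finset (Finset E)) : ℝ :=
  ∑ B ∈ s, μ B * ∏ e ∈ B, w e

theorem tiltMass_nonneg {μ : Finset E → ℝ} (hμ : ∀ B, 0 ≤ μ B) {w : E → ℝ} (hw : ∀ e, 0 < w e)
    (s : Finset (Finset E)) : 0 ≤ tiltMass μ w s :=
  sum_nonneg fun B _ => mul_nonneg (hμ B) (prod_nonneg fun e _ => (hw e).le)

theorem div_le_div_mul_div_iff {a b c Z : ℝ} (hZ : 0 ≤ Z) (hbc : 0 ≤ b * c) :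
    a / Z ≤ b / Z * (c / Z) ↔ a * Z ≤ b * c := by
  rcases hZ.eq_or_lt with rfl | hZ
  · simp [hbc]
  rw [div_mul_div_comm, div_le_div_iff₀ hZ (by positivity), ← mul_assoc]
  exact mul_le_mul_iff_left₀ hZ

theorem isRayleigh_iff_mul_le [Fintype E] [DecidableEq E] {μ : Finset E → ℝ}
    (hμ : ∀ B, 0 ≤ μ B) :
    IsRayleigh μ ↔ ∀ w : E → ℝ, (∀ e, 0 < w e) → ∀ e : E, ∀ T : Finset E, e ∉ T →
      tiltMass μ w (univ.filter (insert e T ⊆ ·)) * tiltMass μ w univ ≤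
        tiltMass μ w (univ.filter (T ⊆ ·)) * tiltMass μ w (univ.filter (e ∈ ·)) :=
  forall₂_congr fun _ hw => forall₃_congr fun _ _ _ =>
    div_le_div_mul_div_iff (tiltMass_nonneg hμ hw _)
      (mul_nonneg (tiltMass_nonneg hμ hw _) (tiltMass_nonneg hμ hw _))

/-- Since `0 ^ 0 = 1` and `ℕ`-subtraction truncates, `0 ^ (deg B - D)` is the indicator of
`deg B ≤ D`; when no set in the support of `μ` has degree below `D`, this is the degree-`D` part. -/
def lowestDegreePart (μ : Finset E → ℝ) (d : E → ℕ) (D : ℕ) (B : Finset E) : ℝ :=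
  μ B * 0 ^ (∑ e ∈ B, d e - D)

theorem lowestDegreePart_nonneg {μ : Finset E → ℝ} (hμ : ∀ B, 0 ≤ μ B) (d : E → ℕ) (D : ℕ)
    (B : Finset E) : 0 ≤ lowestDegreePart μ d D B :=
  mul_nonneg (hμ B) (pow_nonneg le_rfl _)

theorem IsRayleigh.lowestDegreePart [Fintype E] [DecidableEq E] {μ : Finset E → ℝ}
    (hμ0 : ∀ B, 0 ≤ μ B) (hμ : IsRayleigh μ) (d : E → ℕ) {D : ℕ}
    (hD : ∀ B, μ B ≠ 0 → D ≤ ∑ e ∈ B, d e) :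
    IsRayleigh (_root_.lowestDegreePart μ d D) := by
  rw [isRayleigh_iff_mul_le hμ0] at hμ
  rw [isRayleigh_iff_mul_le (lowestDegreePart_nonneg hμ0 d D)]
  intro w hw e T heT
  let G (s : Finset (Finset E)) (ε : ℝ) : ℝ :=
    ∑ B ∈ s, μ B * (∏ e ∈ B, w e) * ε ^ (∑ e ∈ B, d e - D)
  have hG0 (s) : G s 0 = tiltMass (_root_.lowestDegreePart μ d D) w s :=
    sum_congr rfl fun B _ => by simp only [_root_.lowestDegreePart]; ring
  have hGε (s) (ε : ℝ) : tiltMass μ (fun e => w e * ε ^ d e) s = ε ^ D * G s ε := by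
    rw [mul_sum]
    refine sum_congr rfl fun B _ => ?_
    by_cases hB : μ B = 0
    · simp [hB]
    rw [prod_mul_distrib, prod_pow_eq_pow_sum, ← Nat.add_sub_cancel' (hD B hB), pow_add,
      Nat.add_sub_cancel_left]
    ring
  have hpos : Set.Ioi 0 ⊆ {ε | G (univ.filter (insert e T ⊆ ·)) ε * G univ ε ≤
      G (univ.filter (T ⊆ ·)) ε * G (univ.filter (e ∈ ·)) ε} := by
    intro ε (hε : 0 < ε)
    have h := hμ (fun e => w e * ε ^ d e) (fun e => by have := hw e; positivity) e T heT
    simp only [hGε] at h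
    refine le_of_mul_le_mul_left ?_ (by positivity : 0 < ε ^ D * ε ^ D)
    linarith
  have hclosed := (isClosed_le (by fun_prop) (by fun_prop)).closure_subset_iff.2 hpos
  have h0 : (0 : ℝ) ∈ closure (Set.Ioi 0) := by simp [closure_Ioi]
  simpa [hG0] using hclosed h0

section Quadrangle

variable [DecidableEq E] (A : Finset E) (i j k l : E)

/-- Under this grading each basis `A ∪ {x, y}` of the quadrangle (`x ∈ {i, j}`, `y ∈ {k, l}`)
has degree `5`, while `A ∪ {i, j}` has degree `4` and every other set of size `#A + 2` has
degree at least `6`. -/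
def quadrangleDegree (e : E) : ℕ :=
  if e ∈ A then 0 else if e = i ∨ e = j then 2 else if e = k ∨ e = l then 3 else 4

def quadrangle : Finset (Finset E) :=
  {insert i (insert k A), insert i (insert l A), insert j (insert l A), insert j (insert k A)}

variable {A i j k l}

theorem quadrangleDegree_cases {e : E} (he : e ∉ A) :
    (e = i ∨ e = j) ∧ quadrangleDegree A i j k l e = 2 ∨
      (e = k ∨ e = l) ∧ quadrangleDegree A i j k l e = 3 ∨ quadrangleDegree A i j k l e = 4 := by
  unfold quadrangleDegree
  split_ifs <;> simp_all

theorem sum_quadrangleDegree_insert_insert {x y : E} (hx : x ∉ A) (hy : y ∉ A) (hxy : x ≠ y) :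
    ∑ e ∈ insert x (insert y A), quadrangleDegree A i j k l e =
      quadrangleDegree A i j k l x + quadrangleDegree A i j k l y := by
  have hA : ∑ e ∈ A, quadrangleDegree A i j k l e = 0 := sum_eq_zero fun e he => if_pos he
  rw [sum_insert (by simp [hxy, hx]), sum_insert hy, hA, add_zero]

theorem sum_quadrangleDegree_of_mem (hik : i ≠ k) (hil : i ≠ l) (hjk : j ≠ k) (hjl : j ≠ l)
    (hiA : i ∉ A) (hjA : j ∉ A) (hkA : k ∉ A) (hlA : l ∉ A) {B : Finset E}
    (hB : B ∈ quadrangle A i j k l) : ∑ e ∈ B, quadrangleDegree A i j k l e = 5 := by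
  simp only [quadrangle, mem_insert, mem_singleton] at hB
  rcases hB with rfl | rfl | rfl | rfl <;>
    rw [sum_quadrangleDegree_insert_insert (by assumption) (by assumption) (by assumption)] <;>
    simp [quadrangleDegree, *, hik.symm, hil.symm, hjk.symm, hjl.symm]

theorem five_lt_sum_quadrangleDegree {B : Finset E} (hB : #B = #A + 2)
    (hBij : B ≠ insert i (insert j A)) (hBQ : B ∉ quadrangle A i j k l) :
    5 < ∑ e ∈ B, quadrangleDegree A i j k l e := by
  have hsum : ∑ e ∈ B, quadrangleDegree A i j k l e =
      ∑ e ∈ B \ A, quadrangleDegree A i j k l e :=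
    (sum_subset sdiff_subset fun e heB he => if_pos (by simpa [heB] using he)).symm
  have htwo : ∀ e ∈ B \ A, 2 ≤ quadrangleDegree A i j k l e := fun e he => by
    rcases quadrangleDegree_cases (i := i) (j := j) (k := k) (l := l) (mem_sdiff.1 he).2
      with ⟨-, h⟩ | ⟨-, h⟩ | h <;> omega
  have hcard : 2 ≤ #(B \ A) := by
    have := card_le_card_sdiff_add_card (s := B) (t := A); omega
  rcases hcard.eq_or_lt with hcard | hcard
  · obtain ⟨x, y, hxy, hBA⟩ := card_eq_two.1 hcard.symm
    have hAB : A ⊆ B := by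
      have h := card_sdiff_add_card_inter B A
      exact inter_eq_right.1 (eq_of_subset_of_card_le inter_subset_right (by omega))
    have hx : x ∉ A := (mem_sdiff.1 (hBA ▸ mem_insert_self x {y})).2
    have hy : y ∉ A := (mem_sdiff.1 (hBA ▸ mem_insert_of_mem (mem_singleton_self y))).2
    have hBxy : B = insert x (insert y A) := by
      rw [← sdiff_union_of_subset hAB, hBA, insert_union, singleton_union]
    subst hBxy
    rw [sum_quadrangleDegree_insert_insert hx hy hxy]
    have hdx := quadrangleDegree_cases (i := i) (j := j) (k := k) (l := l) hx
    have hdy := quadrangleDegree_cases (i := i) (j := j) (k := k) (l := l) hy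
    rcases hdx with ⟨rfl | rfl, hdx⟩ | ⟨rfl | rfl, hdx⟩ | hdx <;>
    rcases hdy with ⟨rfl | rfl, hdy⟩ | ⟨rfl | rfl, hdy⟩ | hdy <;>
    first
      | omega
      | exact absurd rfl hxy
      | exact absurd (insert_comm _ _ _) hBij
      | exact absurd rfl hBij
      | (apply absurd _ hBQ; simp [quadrangle]; done)
      | (apply absurd _ hBQ; rw [insert_comm]; simp [quadrangle])
  · calc 5 < #(B \ A) • 2 := by simp only [smul_eq_mul]; omega
      _ ≤ _ := card_nsmul_le_sum _ _ _ htwo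
      _ = _ := hsum.symm

theorem sum_quadrangle {M : Type*} [AddCommMonoid M] (hij : i ≠ j) (hik : i ≠ k) (hil : i ≠ l)
    (hjl : j ≠ l) (hkl : k ≠ l) (hiA : i ∉ A) (hkA : k ∉ A) (hlA : l ∉ A)
    (f : Finset E → M) :
    ∑ B ∈ quadrangle A i j k l, f B = f (insert i (insert k A)) + f (insert i (insert l A)) +
      f (insert j (insert l A)) + f (insert j (insert k A)) := by
  have h12 : insert i (insert k A) ≠ insert i (insert l A) :=
    ne_of_mem_of_not_mem' (a := k) (by simp) (by simp [hik.symm, hkl, hkA])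
  have hi3 : i ∉ insert j (insert l A) := by simp [hij, hil, hiA]
  have hi4 : i ∉ insert j (insert k A) := by simp [hij, hik, hiA]
  have h34 : insert j (insert l A) ≠ insert j (insert k A) :=
    ne_of_mem_of_not_mem' (a := l) (by simp) (by simp [hjl.symm, hkl.symm, hlA])
  rw [quadrangle, sum_insert, sum_insert, sum_pair h34, add_assoc, add_assoc]
  · simp [ne_of_mem_of_not_mem' (mem_insert_self i _) hi3,
      ne_of_mem_of_not_mem' (mem_insert_self i _) hi4]
  · simp [h12, ne_of_mem_of_not_mem' (mem_insert_self i _) hi3,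
      ne_of_mem_of_not_mem' (mem_insert_self i _) hi4]

theorem quadrangle_mul_le_mul [Fintype E] {μ : Finset E → ℝ} (hμ0 : ∀ B, 0 ≤ μ B)
    (hμ : IsRayleigh μ) (hhom : ∀ B, μ B ≠ 0 → #B = #A + 2)
    (hμij : μ (insert i (insert j A)) = 0)
    (hij : i ≠ j) (hik : i ≠ k) (hil : i ≠ l) (hjk : j ≠ k) (hjl : j ≠ l) (hkl : k ≠ l)
    (hiA : i ∉ A) (hjA : j ∉ A) (hkA : k ∉ A) (hlA : l ∉ A) :
    μ (insert i (insert k A)) * μ (insert j (insert l A)) ≤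
      μ (insert i (insert l A)) * μ (insert j (insert k A)) := by
  have hdeg_quad {B} (hB : B ∈ quadrangle A i j k l) := sum_quadrangleDegree_of_mem
    hik hil hjk hjl hiA hjA hkA hlA hB
  have hdeg {B} (hB : μ B ≠ 0) (hBQ : B ∉ quadrangle A i j k l) :=
    five_lt_sum_quadrangleDegree (hhom B hB) (by rintro rfl; exact hB hμij) hBQ
  have hD (B) (hB : μ B ≠ 0) : 5 ≤ ∑ e ∈ B, quadrangleDegree A i j k l e := by
    by_cases hBQ : B ∈ quadrangle A i j k l
    · exact (hdeg_quad hBQ).ge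
    · exact (hdeg hB hBQ).le
  have hν : lowestDegreePart μ (quadrangleDegree A i j k l) 5 =
      fun B => if B ∈ quadrangle A i j k l then μ B else 0 := by
    funext B
    by_cases hBQ : B ∈ quadrangle A i j k l
    · simp [lowestDegreePart, hBQ, hdeg_quad hBQ]
    by_cases hB : μ B = 0
    · simp [lowestDegreePart, hB]
    simp [lowestDegreePart, hBQ, zero_pow (Nat.sub_ne_zero_of_lt (hdeg hB hBQ))]
  have hmass (s : Finset (Finset E)) :
      tiltMass (lowestDegreePart μ (quadrangleDegree A i j k l) 5) (fun _ => 1) s =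
        ∑ B ∈ quadrangle A i j k l, if B ∈ s then μ B else 0 := by
    simp only [tiltMass, hν, prod_const_one, mul_one, sum_ite_mem, inter_comm]
  have h := (isRayleigh_iff_mul_le (lowestDegreePart_nonneg hμ0 _ _)).1
    (hμ.lowestDegreePart hμ0 _ hD) (fun _ => 1) (fun _ => one_pos) i {k} (by simpa using hik)
  simp only [hmass, sum_quadrangle hij hik hil hjl hkl hiA hkA hlA] at h
  simp only [insert_subset_iff, singleton_subset_iff, mem_filter, mem_univ, mem_insert, hik, hiA,
    or_self, or_false, hik.symm, hkA, or_true, and_self, ↓reduceIte, hil, hkl, and_false, add_zero,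
    hij, hjk.symm, and_true] at h
  linear_combination h

end Quadrangle

end

theorem stmt_17_general {E : Type*} [Fintype E] [DecidableEq E] (M : FinMatroid E)
    -- μ is a full-support Rayleigh probability measure on the bases of M
    (μ : Finset E → ℝ)
    (h0 : ∀ B, 0 ≤ μ B)
    (hsupp : ∀ B : Finset E, μ B ≠ 0 ↔ M.IsBase B)
    (hray : IsRayleigh μ)
    -- a degenerate quadrangle of bases
    (A : Finset E) (i j k l : E)
    (hij : i ≠ j) (hik : i ≠ k) (hil : i ≠ l)
    (hjk : j ≠ k) (hjl : j ≠ l) (hkl : k ≠ l)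
    (hiA : i ∉ A) (hjA : j ∉ A) (hkA : k ∉ A) (hlA : l ∉ A)
    (hB1 : M.IsBase (insert i (insert k A)))
    (hdeg : ¬ (M.IsBase (insert i (insert j A)) ∧ M.IsBase (insert k (insert l A)))) :
    μ (insert i (insert k A)) * μ (insert j (insert l A)) =
      μ (insert i (insert l A)) * μ (insert j (insert k A)) := by
  have hhom (B) (hB : μ B ≠ 0) : #B = #A + 2 := by
    rw [((hsupp B).1 hB).card_eq hB1, card_insert_of_notMem (by simp [hik, hiA]),
      card_insert_of_notMem hkA]
  have hzero : μ (insert i (insert j A)) = 0 ∨ μ (insert k (insert l A)) = 0 := by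
    by_contra! h
    exact hdeg ⟨(hsupp _).1 h.1, (hsupp _).1 h.2⟩
  rcases hzero with hμij | hμkl
  · exact le_antisymm
      (quadrangle_mul_le_mul h0 hray hhom hμij hij hik hil hjk hjl hkl hiA hjA hkA hlA)
      (quadrangle_mul_le_mul h0 hray hhom hμij hij hil hik hjl hjk hkl.symm hiA hjA hlA hkA)
  · have h₁ := quadrangle_mul_le_mul h0 hray hhom hμkl hkl hik.symm hjk.symm hil.symm hjl.symm
      hij hkA hlA hiA hjA
    have h₂ := quadrangle_mul_le_mul h0 hray hhom hμkl hkl hjk.symm hik.symm hjl.symm hil.symm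
      hij.symm hkA hlA hjA hiA
    rw [insert_comm k, insert_comm l, insert_comm k, insert_comm l] at h₁ h₂
    linarith

theorem stmt_17 {E : Type*} [Fintype E] [DecidableEq E] (M : FinMatroid E)
    -- μ is a full-support Rayleigh probability measure on the bases of M
    (μ : Finset E → ℝ)
    (h0 : ∀ B, 0 ≤ μ B)
    (hsupp : ∀ B : Finset E, μ B ≠ 0 ↔ M.IsBase B)
    (hsum : (∑ B : Finset E, μ B) = 1)
    (hray : IsRayleigh μ)
    -- a degenerate quadrangle of bases
    (A : Finset E) (i j k l : E)
    (hij : i ≠ j) (hik : i ≠ k) (hil : i ≠ l)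
    (hjk : j ≠ k) (hjl : j ≠ l) (hkl : k ≠ l)
    (hiA : i ∉ A) (hjA : j ∉ A) (hkA : k ∉ A) (hlA : l ∉ A)
    (hB1 : M.IsBase (insert i (insert k A)))
    (hB2 : M.IsBase (insert i (insert l A)))
    (hB3 : M.IsBase (insert j (insert l A)))
    (hB4 : M.IsBase (insert j (insert k A)))
    (hdeg : ¬ (M.IsBase (insert i (insert j A)) ∧ M.IsBase (insert k (insert l A)))) :
    μ (insert i (insert k A)) * μ (insert j (insert l A)) =
      μ (insert i (insert l A)) * μ (insert j (insert k A)) :=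
  stmt_17_general M μ h0 hsupp hray A i j k l hij hik hil hjk hjl hkl hiA hjA hkA hlA hB1 hdeg
end

section
/- Fix ε ∈ (0,1/2). Let G be the complete graph K4 on vertices {1,2,3,4}, with outer edges {12,23,34,41} each given activation probability (1−ε)/2 and diagonal edges {13,24} each given activation probability ε; call this vector x. For α ∈ (0,1), let μ* be the unique maximum-entropy probability distribution over the matchings of K4 with marginals p_e = α x_e for every edge e. If μ* satisfies the stationary implementability constraints P_{S∼μ*}[e ∈ S | S∖{e} = T] ≤ x_e for every edge e and every matching T with e ∉ T and P[S∖{e} = T] > 0, then the corresponding α satisfy limsup_{ε→0} α ≤ (√3−1)/2. Equivalently: for every δ > 0 there exists ε0 > 0 such that for all ε < ε0 any α with this property is at most (√3−1)/2+δ. In particular, the maximum-entropy method cannot certify a stationary selectability constant larger than (√3−1)/2 ≈ 0.366 for general (non-bipartite) matchings. -/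
open Finset

namespace Stmt18

/-- The four outer edges of K4 (viewed as a 4-cycle 1-2-3-4). -/
def outerEdges : Finset (Finset (Fin 4)) := {{0, 1}, {1, 2}, {2, 3}, {3, 0}}

/-- The two diagonal edges of K4. -/
def diagEdges : Finset (Finset (Fin 4)) := {{0, 2}, {1, 3}}

/-- The six edges of K4. -/
def edges : Finset (Finset (Fin 4)) := outerEdges ∪ diagEdges

/-- A matching of K4: a set of pairwise vertex-disjoint edges. -/
def IsK4Matching (M : Finset (Finset (Fin 4))) : Prop :=
  M ⊆ edges ∧ ∀ a ∈ M, ∀ b ∈ M, a ≠ b → Disjoint a b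

/-- Activation probabilities: ε on diagonals, (1−ε)/2 on outer edges. -/
noncomputable def xvec (ε : ℝ) (e : Finset (Fin 4)) : ℝ :=
  if e ∈ diagEdges then ε else (1 - ε) / 2

/-- `μ` is a probability distribution on the matchings of K4 with marginals `α · x(ε)`. -/
def Feasible (ε α : ℝ) (μ : Finset (Finset (Fin 4)) → ℝ) : Prop :=
  (∀ M, 0 ≤ μ M) ∧
  (∑ M : Finset (Finset (Fin 4)), μ M) = 1 ∧
  (∀ M, μ M ≠ 0 → IsK4Matching M) ∧
  (∀ e ∈ edges, ∑ M ∈ univ.filter (fun M => e ∈ M), μ M = α * xvec ε e)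

/-- The Shannon entropy of `μ`. -/
noncomputable def entropy (μ : Finset (Finset (Fin 4)) → ℝ) : ℝ :=
  -∑ M : Finset (Finset (Fin 4)), μ M * Real.log (μ M)

end Stmt18

/-!
A maximum-entropy `μ` is log-supermodular on pairs of disjoint edges:
`μ ∅ * μ {e, f} ≤ μ {e} * μ {f}`, since otherwise moving a little mass from `∅` and `{e, f}` to
`{e}` and `{f}` keeps every marginal and strictly increases the entropy. The implementability
constraints along the chain `∅ ⊂ {13} ⊂ {02, 13}` of diagonal matchings force
`μ ∅ ≥ α (1 - ε)²`. With `c = α (1 - ε) / 2` the marginal of an outer edge and `z = μ ∅`,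
log-supermodularity on each pair of opposite outer edges `e, f` gives
`z² + 4 c z ≤ (2 μ {e} + z)²`, while the total mass bounds the smaller of the two right-hand
sides by `(1 - 2c)²`. At `ε = 0` the resulting inequality reads `3 α² ≤ (1 - α)²`, that is
`α ≤ (√3 - 1) / 2`.
-/

open Finset Real

lemma mul_log_tangent_le {x y : ℝ} (hx : 0 ≤ x) (hy : 0 < y) :
    y * log y + (log y + 1) * (x - y) ≤ x * log x := by
  rcases hx.eq_or_lt with rfl | hx
  · simp only [mul_zero, zero_sub, log_zero]
    linarith
  · have h := log_le_sub_one_of_pos (div_pos hy hx)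
    rw [log_div hy.ne' hx.ne'] at h
    have : x * (log y - log x) ≤ y - x := calc
      _ ≤ x * (y / x - 1) := mul_le_mul_of_nonneg_left h hx.le
      _ = y - x := by field_simp
    linarith

lemma exists_negMulLog_shift_gt {z u v w : ℝ} (hz : 0 < z) (hw : 0 < w) (hu : 0 ≤ u)
    (hv : 0 ≤ v) (h : u * v < z * w) :
    ∃ d, 0 < d ∧ d < z ∧ d < w ∧
      negMulLog z + negMulLog u + negMulLog v + negMulLog w <
        negMulLog (z - d) + negMulLog (u + d) + negMulLog (v + d) + negMulLog (w - d) := by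
  set d := min (min z w / 2) ((z * w - u * v) / (2 * (z + u + v + w)))
  have hd : 0 < d := lt_min (by positivity) (div_pos (by linarith) (by positivity))
  have hdz : d < z := (min_le_left _ _).trans_lt (by linarith [min_le_left z w])
  have hdw : d < w := (min_le_left _ _).trans_lt (by linarith [min_le_right z w])
  -- the product `(z - d) * (w - d) - (u + d) * (v + d)` is affine in `d`
  have hprod : (u + d) * (v + d) < (z - d) * (w - d) := by
    have : d * (2 * (z + u + v + w)) ≤ z * w - u * v :=
      (le_div_iff₀ (by positivity)).1 (min_le_right _ _)
    nlinarith
  have hlog : log ((u + d) * (v + d)) < log ((z - d) * (w - d)) :=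
    log_lt_log (by positivity) hprod
  rw [log_mul (by positivity) (by positivity), log_mul (by linarith) (by linarith)] at hlog
  refine ⟨d, hd, hdz, hdw, ?_⟩
  have t₁ := mul_log_tangent_le hz.le (sub_pos.2 hdz)
  have t₂ := mul_log_tangent_le hu (add_pos_of_nonneg_of_pos hu hd)
  have t₃ := mul_log_tangent_le hv (add_pos_of_nonneg_of_pos hv hd)
  have t₄ := mul_log_tangent_le hw.le (sub_pos.2 hdw)
  simp only [negMulLog, neg_mul]
  nlinarith

lemma mul_one_sub_le_of_div_le {p q x : ℝ} (hp : 0 ≤ p) (hq : 0 ≤ q)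
    (h : 0 < p + q → q / (p + q) ≤ x) : q * (1 - x) ≤ x * p := by
  rcases (add_nonneg hp hq).eq_or_lt with h₀ | h₀
  · obtain ⟨rfl, rfl⟩ : p = 0 ∧ q = 0 := ⟨by linarith, by linarith⟩
    simp
  · have := (div_le_iff₀ h₀).1 (h h₀)
    linarith

lemma mul_one_sub_sq_le {z v w α ε : ℝ} (hε : 0 < ε) (hε₁ : ε ≤ 1) (hvw : v + w = α * ε)
    (hv : v * (1 - ε) ≤ ε * z) (hw : w * (1 - ε) ≤ ε * v) : α * (1 - ε) ^ 2 ≤ z := by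
  have hv' : α * ε * (1 - ε) ≤ v := by nlinarith
  have : ε * (α * (1 - ε) ^ 2) ≤ ε * z := by nlinarith
  exact le_of_mul_le_mul_left this hε

lemma sq_add_four_mul_le_of_mul_le {z u u' w c : ℝ} (hG : z * w ≤ u * u') (hu : u + w = c)
    (hu' : u' + w = c) : z ^ 2 + 4 * c * z ≤ (2 * u + z) ^ 2 := by
  have hw : w = c - u := by linarith
  have hu'' : u' = u := by linarith
  rw [hw, hu''] at hG
  nlinarith

lemma sq_add_four_mul_le_one_sub_sq {z c u₁ u₂ : ℝ} (hz : 0 ≤ z) (hu₁ : 0 ≤ u₁) (hu₂ : 0 ≤ u₂)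
    (h₁ : z ^ 2 + 4 * c * z ≤ (2 * u₁ + z) ^ 2) (h₂ : z ^ 2 + 4 * c * z ≤ (2 * u₂ + z) ^ 2)
    (htot : z + u₁ + u₂ + 2 * c ≤ 1) : z ^ 2 + 4 * c * z ≤ (1 - 2 * c) ^ 2 := by
  wlog h : u₁ ≤ u₂ generalizing u₁ u₂
  · exact this hu₂ hu₁ h₂ h₁ (by linarith) (le_of_not_ge h)
  exact h₁.trans (pow_le_pow_left₀ (by positivity) (by linarith) 2)

lemma two_sq_add_two_mul_sub_one_le {z α ε : ℝ} (hα : 0 ≤ α) (hα₁ : α ≤ 1) (hε : 0 ≤ ε)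
    (hε₁ : ε ≤ 1) (hz : α * (1 - ε) ^ 2 ≤ z)
    (h : z ^ 2 + 4 * (α * ((1 - ε) / 2)) * z ≤ (1 - 2 * (α * ((1 - ε) / 2))) ^ 2) :
    2 * α ^ 2 + 2 * α - 1 ≤ 12 * ε := by
  have hs : 0 ≤ 1 - ε := by linarith
  have hmono : (α * (1 - ε) ^ 2) ^ 2 + 2 * α * (1 - ε) * (α * (1 - ε) ^ 2)
      ≤ (1 - α * (1 - ε)) ^ 2 := by
    have hz₀ : 0 ≤ α * (1 - ε) ^ 2 := by positivity
    have hc : 0 ≤ α * (1 - ε) := mul_nonneg hα hs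
    nlinarith [mul_nonneg (sub_nonneg.2 hz)
      (by linarith : 0 ≤ z + α * (1 - ε) ^ 2 + 2 * (α * (1 - ε)))]
  have hbound : α ^ 2 * ((1 - ε) ^ 3 + 3 * (1 - ε) ^ 2 + 2 * (1 - ε) + 2) + 2 * α ≤ 10 := by
    have : (1 - ε) ^ 3 + 3 * (1 - ε) ^ 2 + 2 * (1 - ε) + 2 ≤ 8 := by
      nlinarith [pow_le_one₀ hs (by linarith : 1 - ε ≤ 1) (n := 2),
        pow_le_one₀ hs (by linarith : 1 - ε ≤ 1) (n := 3)]
    nlinarith [pow_le_one₀ hα hα₁ (n := 2), sq_nonneg α]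
  nlinarith [mul_le_mul_of_nonneg_left hbound hε]

lemma le_root_add_of_two_sq_add_two_mul_sub_one_le {α δ : ℝ} (hα : 0 ≤ α) (hδ : 0 ≤ δ)
    (h : 2 * α ^ 2 + 2 * α - 1 ≤ 2 * δ) : α ≤ (√3 - 1) / 2 + δ := by
  by_contra! hlt
  have h3 : √3 ^ 2 = 3 := sq_sqrt (by norm_num)
  have h1 : 1 ≤ √3 := by nlinarith [sqrt_nonneg 3]
  have hfactor : 2 * α ^ 2 + 2 * α - 1 = 2 * (α - (√3 - 1) / 2) * (α + (√3 + 1) / 2) := by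
    ring_nf; rw [h3]; ring
  nlinarith

section Shift

variable {E : Type*} [DecidableEq E]

lemma pair_ne_singleton_left {a b : E} (hab : a ≠ b) : ({a, b} : Finset E) ≠ {a} :=
  fun h => by simpa [hab] using congrArg card h

lemma pair_ne_singleton_right {a b : E} (hab : a ≠ b) : ({a, b} : Finset E) ≠ {b} :=
  fun h => by simpa [hab] using congrArg card h

def shiftPair (μ : Finset E → ℝ) (a b : E) (d : ℝ) (M : Finset E) : ℝ :=
  if M = ∅ ∨ M = {a, b} then μ M - d else if M = {a} ∨ M = {b} then μ M + d else μ M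

variable {a b : E}

lemma shiftPair_empty (μ : Finset E → ℝ) (d : ℝ) : shiftPair μ a b d ∅ = μ ∅ - d := by
  simp [shiftPair]

lemma shiftPair_pair (μ : Finset E → ℝ) (d : ℝ) : shiftPair μ a b d {a, b} = μ {a, b} - d := by
  simp [shiftPair]

lemma shiftPair_left (hab : a ≠ b) (μ : Finset E → ℝ) (d : ℝ) :
    shiftPair μ a b d {a} = μ {a} + d := by
  simp [shiftPair, (pair_ne_singleton_left hab).symm]

lemma shiftPair_right (hab : a ≠ b) (μ : Finset E → ℝ) (d : ℝ) :
    shiftPair μ a b d {b} = μ {b} + d := by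
  simp [shiftPair, (pair_ne_singleton_right hab).symm]

lemma shiftPair_of_ne {M : Finset E} (μ : Finset E → ℝ) (d : ℝ) (h₀ : M ≠ ∅) (h₁ : M ≠ {a})
    (h₂ : M ≠ {b}) (h₃ : M ≠ {a, b}) : shiftPair μ a b d M = μ M := by
  simp [shiftPair, *]

lemma sum_eq_of_eq_zero_off_pair [Fintype E] (hab : a ≠ b) (g : Finset E → ℝ)
    (hg : ∀ M, M ≠ ∅ → M ≠ {a} → M ≠ {b} → M ≠ {a, b} → g M = 0) :
    ∑ M, g M = g ∅ + g {a} + g {b} + g {a, b} := by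
  rw [← sum_subset (subset_univ {∅, {a}, {b}, {a, b}}) fun M _ hM => by
    simp only [mem_insert, mem_singleton, not_or] at hM
    exact hg M hM.1 hM.2.1 hM.2.2.1 hM.2.2.2]
  rw [sum_insert, sum_insert, sum_insert, sum_singleton, add_assoc, add_assoc]
  all_goals simp [hab, (insert_nonempty a {b}).ne_empty.symm, (pair_ne_singleton_left hab).symm,
    (pair_ne_singleton_right hab).symm]

lemma sum_mul_shiftPair_sub [Fintype E] (hab : a ≠ b) (μ f : Finset E → ℝ) (d : ℝ) :
    ∑ M, f M * (shiftPair μ a b d M - μ M) = d * (f {a} + f {b} - f ∅ - f {a, b}) := by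
  rw [sum_eq_of_eq_zero_off_pair hab _ fun M h₀ h₁ h₂ h₃ => by
    rw [shiftPair_of_ne μ d h₀ h₁ h₂ h₃, sub_self, mul_zero]]
  rw [shiftPair_empty, shiftPair_pair, shiftPair_left hab, shiftPair_right hab]
  ring

end Shift

namespace Stmt18

variable {ε α : ℝ} {μ : Finset (Finset (Fin 4)) → ℝ}

def IsMaxEntropy (ε α : ℝ) (μ : Finset (Finset (Fin 4)) → ℝ) : Prop :=
  Feasible ε α μ ∧ ∀ ν, Feasible ε α ν → entropy ν ≤ entropy μ

def IsStationaryImplementable (ε : ℝ) (μ : Finset (Finset (Fin 4)) → ℝ) : Prop :=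
  ∀ e ∈ edges, ∀ T : Finset (Finset (Fin 4)), IsK4Matching T → e ∉ T →
    0 < μ T + μ (insert e T) → μ (insert e T) / (μ T + μ (insert e T)) ≤ xvec ε e

lemma entropy_eq_sum_negMulLog (μ : Finset (Finset (Fin 4)) → ℝ) :
    entropy μ = ∑ M, negMulLog (μ M) := by
  simp [entropy, negMulLog, sum_neg_distrib]

lemma xvec_of_mem_diagEdges {e : Finset (Fin 4)} (he : e ∈ diagEdges) : xvec ε e = ε :=
  if_pos he

lemma xvec_of_mem_outerEdges {e : Finset (Fin 4)} (he : e ∈ outerEdges) :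
    xvec ε e = (1 - ε) / 2 := by
  have : e ∉ diagEdges := by revert e; decide
  simp [xvec, this]

lemma mem_edges_of_mem_outerEdges {e : Finset (Fin 4)} (he : e ∈ outerEdges) : e ∈ edges :=
  subset_union_left he

lemma eq_of_disjoint_of_disjoint : ∀ e ∈ edges, ∀ f ∈ edges, ∀ g ∈ edges,
    Disjoint e f → Disjoint e g → g = f := by
  decide

lemma ne_of_disjoint : ∀ e ∈ edges, ∀ f ∈ edges, Disjoint e f → e ≠ f := by
  decide

lemma isK4Matching_empty : IsK4Matching ∅ := ⟨empty_subset _, by simp⟩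

lemma isK4Matching_singleton {e : Finset (Fin 4)} (he : e ∈ edges) : IsK4Matching {e} :=
  ⟨singleton_subset_iff.2 he, by simp⟩

lemma isK4Matching_pair {e f : Finset (Fin 4)} (he : e ∈ edges) (hf : f ∈ edges)
    (hd : Disjoint e f) : IsK4Matching {e, f} := by
  refine ⟨insert_subset he (singleton_subset_iff.2 hf), ?_⟩
  simp only [mem_insert, mem_singleton]
  rintro x (rfl | rfl) y (rfl | rfl) hxy <;> first | exact absurd rfl hxy | exact hd | exact hd.symm

lemma IsK4Matching.eq_singleton_or_eq_pair {M : Finset (Finset (Fin 4))} {e f : Finset (Fin 4)}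
    (hM : IsK4Matching M) (he : e ∈ M) (hf : f ∈ edges) (hd : Disjoint e f) :
    M = {e} ∨ M = {e, f} := by
  have hsub : M ⊆ {e, f} := fun g hg => by
    rcases eq_or_ne g e with rfl | hge
    · exact mem_insert_self g _
    · exact mem_insert_of_mem <| mem_singleton.2 <| eq_of_disjoint_of_disjoint e (hM.1 he) f hf
        g (hM.1 hg) hd (hM.2 e he g hg hge.symm)
  rw [← insert_erase he]
  rcases subset_singleton_iff.1 (subset_insert_iff.1 hsub) with h | h <;> simp [h]

lemma Feasible.sum_le_one (h : Feasible ε α μ) (s : Finset (Finset (Finset (Fin 4)))) :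
    ∑ M ∈ s, μ M ≤ 1 :=
  h.2.1 ▸ sum_le_univ_sum_of_nonneg h.1

lemma Feasible.marginal_eq (h : Feasible ε α μ) {e f : Finset (Fin 4)} (he : e ∈ edges)
    (hf : f ∈ edges) (hd : Disjoint e f) : μ {e} + μ {e, f} = α * xvec ε e := by
  have hne : ({e} : Finset (Finset (Fin 4))) ≠ {e, f} :=
    (pair_ne_singleton_left (ne_of_disjoint e he f hf hd)).symm
  rw [← h.2.2.2 e he, ← sum_pair hne]
  refine sum_subset (by simp [insert_subset_iff]) fun M hM hM' => ?_
  by_contra h0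
  rcases (h.2.2.1 M h0).eq_singleton_or_eq_pair (mem_filter.1 hM).2 hf hd with rfl | rfl <;>
    simp at hM'

lemma feasible_shiftPair (h : Feasible ε α μ) {a b : Finset (Fin 4)} (ha : a ∈ edges)
    (hb : b ∈ edges) (hd : Disjoint a b) {d : ℝ} (hd₀ : 0 ≤ d) (hdz : d ≤ μ ∅)
    (hdw : d ≤ μ {a, b}) : Feasible ε α (shiftPair μ a b d) := by
  have hab := ne_of_disjoint a ha b hb hd
  obtain ⟨hnonneg, hsum, hsupp, hmarg⟩ := h
  refine ⟨fun M => ?_, ?_, fun M hM => ?_, fun e he => ?_⟩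
  · have := hnonneg M
    unfold shiftPair
    split_ifs with h₁ <;> [rcases h₁ with rfl | rfl; skip; skip] <;> linarith
  · have := sum_mul_shiftPair_sub hab μ 1 d
    simp only [Pi.one_apply, one_mul, sum_sub_distrib] at this
    linarith
  · unfold shiftPair at hM
    split_ifs at hM with h₁ h₂
    · rcases h₁ with rfl | rfl
      exacts [isK4Matching_empty, isK4Matching_pair ha hb hd]
    · rcases h₂ with rfl | rfl
      exacts [isK4Matching_singleton ha, isK4Matching_singleton hb]
    · exact hsupp M hM
  · rw [sum_filter, ← hmarg e he, sum_filter, ← sub_eq_zero, ← sum_sub_distrib]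
    have hind : ∀ M, ((if e ∈ M then shiftPair μ a b d M else 0) - if e ∈ M then μ M else 0)
        = (if e ∈ M then 1 else 0) * (shiftPair μ a b d M - μ M) := fun M => by
      split_ifs <;> ring
    rw [sum_congr rfl fun M _ => hind M, sum_mul_shiftPair_sub hab]
    by_cases hea : e = a <;> by_cases heb : e = b <;> simp_all

lemma IsMaxEntropy.empty_mul_pair_le (hμ : IsMaxEntropy ε α μ) {a b : Finset (Fin 4)}
    (ha : a ∈ edges) (hb : b ∈ edges) (hd : Disjoint a b) : μ ∅ * μ {a, b} ≤ μ {a} * μ {b} := by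
  by_contra! hlt
  have hnonneg := hμ.1.1
  have hprod : 0 < μ ∅ * μ {a, b} := (mul_nonneg (hnonneg _) (hnonneg _)).trans_lt hlt
  have hz : 0 < μ ∅ := pos_of_mul_pos_left hprod (hnonneg _)
  have hw : 0 < μ {a, b} := pos_of_mul_pos_right hprod (hnonneg _)
  obtain ⟨d, hd₀, hdz, hdw, hgain⟩ :=
    exists_negMulLog_shift_gt hz hw (hnonneg {a}) (hnonneg {b}) hlt
  have hle := hμ.2 _ (feasible_shiftPair hμ.1 ha hb hd hd₀.le hdz.le hdw.le)
  have hab := ne_of_disjoint a ha b hb hd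
  have hdiff := sum_eq_of_eq_zero_off_pair hab
    (fun M => negMulLog (shiftPair μ a b d M) - negMulLog (μ M)) fun M h₀ h₁ h₂ h₃ => by
      simp only [shiftPair_of_ne μ d h₀ h₁ h₂ h₃, sub_self]
  simp only [sum_sub_distrib, shiftPair_empty, shiftPair_pair, shiftPair_left hab,
    shiftPair_right hab] at hdiff
  rw [entropy_eq_sum_negMulLog, entropy_eq_sum_negMulLog] at hle
  linarith

lemma IsStationaryImplementable.mul_one_sub_le (hc : IsStationaryImplementable ε μ)
    (hμ : ∀ M, 0 ≤ μ M) {e : Finset (Fin 4)} {T : Finset (Finset (Fin 4))} (he : e ∈ edges)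
    (hT : IsK4Matching T) (heT : e ∉ T) :
    μ (insert e T) * (1 - xvec ε e) ≤ xvec ε e * μ T :=
  mul_one_sub_le_of_div_le (hμ _) (hμ _) (hc e he T hT heT)

lemma Feasible.mul_one_sub_sq_le_empty (h : Feasible ε α μ) (hc : IsStationaryImplementable ε μ)
    (hε : 0 < ε) (hε₁ : ε ≤ 1) : α * (1 - ε) ^ 2 ≤ μ ∅ := by
  have h₁ := hc.mul_one_sub_le h.1 (e := {1, 3}) (T := ∅) (by decide) isK4Matching_empty
    (by decide)
  have h₂ := hc.mul_one_sub_le h.1 (e := {0, 2}) (T := {{1, 3}}) (by decide)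
    (isK4Matching_singleton (by decide)) (by decide)
  have hm := h.marginal_eq (e := {1, 3}) (f := {0, 2}) (by decide) (by decide) (by decide)
  rw [insert_empty, xvec_of_mem_diagEdges (by decide)] at h₁
  rw [xvec_of_mem_diagEdges (by decide)] at h₂ hm
  rw [pair_comm ({1, 3} : Finset (Fin 4))] at hm
  exact mul_one_sub_sq_le hε hε₁ hm h₁ h₂

lemma IsMaxEntropy.sq_add_four_mul_le (hμ : IsMaxEntropy ε α μ) {e f : Finset (Fin 4)}
    (he : e ∈ outerEdges) (hf : f ∈ outerEdges) (hd : Disjoint e f) :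
    μ ∅ ^ 2 + 4 * (α * ((1 - ε) / 2)) * μ ∅ ≤ (2 * μ {e} + μ ∅) ^ 2 := by
  have he' := mem_edges_of_mem_outerEdges he
  have hf' := mem_edges_of_mem_outerEdges hf
  have hme := hμ.1.marginal_eq he' hf' hd
  have hmf := hμ.1.marginal_eq hf' he' hd.symm
  rw [xvec_of_mem_outerEdges he] at hme
  rw [xvec_of_mem_outerEdges hf, pair_comm f] at hmf
  exact sq_add_four_mul_le_of_mul_le (hμ.empty_mul_pair_le he' hf' hd) hme hmf

lemma Feasible.mass_add_le (h : Feasible ε α μ) :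
    μ ∅ + μ {{0, 1}} + μ {{1, 2}} + 2 * (α * ((1 - ε) / 2)) ≤ 1 := by
  have hmass := h.sum_le_one
    {∅, {{0, 1}}, {{1, 2}}, {{2, 3}}, {{3, 0}}, {{0, 1}, {2, 3}}, {{1, 2}, {3, 0}}}
  rw [sum_insert (by decide), sum_insert (by decide), sum_insert (by decide),
    sum_insert (by decide), sum_insert (by decide), sum_insert (by decide),
    sum_singleton] at hmass
  have h₁ := h.marginal_eq (e := {2, 3}) (f := {0, 1}) (by decide) (by decide) (by decide)
  have h₂ := h.marginal_eq (e := {3, 0}) (f := {1, 2}) (by decide) (by decide) (by decide)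
  rw [xvec_of_mem_outerEdges (by decide), pair_comm ({2, 3} : Finset (Fin 4))] at h₁
  rw [xvec_of_mem_outerEdges (by decide), pair_comm ({3, 0} : Finset (Fin 4))] at h₂
  linarith

end Stmt18

open Stmt18 in
theorem stmt_18 :
    ∀ δ : ℝ, 0 < δ → ∃ ε0 : ℝ, 0 < ε0 ∧
      ∀ ε : ℝ, 0 < ε → ε < ε0 → ε < 1 / 2 →
      ∀ α : ℝ, 0 < α → α < 1 →
      ∀ μ : Finset (Finset (Fin 4)) → ℝ,
        -- μ is the maximum-entropy distribution over matchings with marginals α·x(ε)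
        Feasible ε α μ →
        (∀ ν, Feasible ε α ν → entropy ν ≤ entropy μ) →
        -- if μ satisfies the stationary implementability constraints
        (∀ e ∈ edges, ∀ T : Finset (Finset (Fin 4)),
          IsK4Matching T → e ∉ T → 0 < μ T + μ (insert e T) →
          μ (insert e T) / (μ T + μ (insert e T)) ≤ xvec ε e) →
        -- then α is (up to δ) at most (√3 − 1)/2
        α ≤ (Real.sqrt 3 - 1) / 2 + δ := by
  intro δ hδ
  refine ⟨δ / 6, by positivity, fun ε hε hεδ hε₂ α hα hα₁ μ hfeas hmax hc => ?_⟩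
  have hμ : IsMaxEntropy ε α μ := ⟨hfeas, hmax⟩
  have hz := hfeas.mul_one_sub_sq_le_empty hc hε (by linarith)
  have h₁ := hμ.sq_add_four_mul_le (e := {0, 1}) (f := {2, 3}) (by decide) (by decide) (by decide)
  have h₂ := hμ.sq_add_four_mul_le (e := {1, 2}) (f := {3, 0}) (by decide) (by decide) (by decide)
  have hquad := sq_add_four_mul_le_one_sub_sq (hfeas.1 _) (hfeas.1 _) (hfeas.1 _) h₁ h₂
    hfeas.mass_add_le
  have hα' := two_sq_add_two_mul_sub_one_le hα.le hα₁.le hε.le (by linarith) hz hquad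
  exact le_root_add_of_two_sq_add_two_mul_sub_one_le hα.le hδ.le (by linarith)
end

section
/- For n ≥ 1, let G_n be the graph with vertex set {u, v, m_1, …, m_n} and edge set {u m_i, m_i v : i = 1,…,n}. The number of forests (acyclic edge subsets) of G_n in which u and v lie in different connected components is 3^n, the number of forests in which u and v are connected is n·3^{n−1}, and hence under the uniform distribution on forests of G_n, the probability that u and v are in different components equals 3/(n+3), which tends to 0 as n → ∞. Consequently, the uniform (maximum-entropy) distribution on the independent sets of the graphic matroid of G_n places vanishing probability on the event that an additional edge {u,v} would be addable. -/
/-!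
A set `F` of edges of `G_n` is determined by `A = {i | u m_i ∈ F}` and `B = {i | m_i v ∈ F}`.
The vertices `u` and `v` are connected in `F` iff `A ∩ B ≠ ∅`, and `F` is a forest iff
`|A ∩ B| ≤ 1`: two common indices `i ≠ j` give the 4-cycle `u m_i v m_j`, while otherwise
every edge is a bridge. Pairs `(A, B)` with `A ∩ B = C` correspond to the `3^(n - |C|)` ways of
putting each index outside `C` into `A` only, `B` only, or neither.
-/

open Finset

namespace Stmt19

/-- Vertices of `G_n`: the terminal `u`, the terminal `v`, and the middle vertices `m i`. -/
abbrev Vtx (n : ℕ) := Unit ⊕ Unit ⊕ Fin n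

def u (n : ℕ) : Vtx n := Sum.inl ()
def v (n : ℕ) : Vtx n := Sum.inr (Sum.inl ())
def m (n : ℕ) (i : Fin n) : Vtx n := Sum.inr (Sum.inr i)

/-- The edges of `G_n`: `u m_i` and `m_i v` for `i = 1, …, n`. -/
def edges (n : ℕ) : Finset (Sym2 (Vtx n)) :=
  (Finset.univ.image fun i : Fin n => s(u n, m n i)) ∪
    (Finset.univ.image fun i : Fin n => s(m n i, v n))

open Classical in
/-- The number of forests (acyclic edge subsets) of `G_n`. -/
noncomputable def forestCount (n : ℕ) : ℕ :=
  ((edges n).powerset.filter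
    (fun F => (SimpleGraph.fromEdgeSet (↑F : Set (Sym2 (Vtx n)))).IsAcyclic)).card

open Classical in
/-- The number of forests of `G_n` in which `u` and `v` lie in different components. -/
noncomputable def disconnCount (n : ℕ) : ℕ :=
  ((edges n).powerset.filter
    (fun F => (SimpleGraph.fromEdgeSet (↑F : Set (Sym2 (Vtx n)))).IsAcyclic ∧
      ¬ (SimpleGraph.fromEdgeSet (↑F : Set (Sym2 (Vtx n)))).Reachable (u n) (v n))).card

open Classical in
/-- The number of forests of `G_n` in which `u` and `v` are connected. -/
noncomputable def connCount (n : ℕ) : ℕ :=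
  ((edges n).powerset.filter
    (fun F => (SimpleGraph.fromEdgeSet (↑F : Set (Sym2 (Vtx n)))).IsAcyclic ∧
      (SimpleGraph.fromEdgeSet (↑F : Set (Sym2 (Vtx n)))).Reachable (u n) (v n))).card

end Stmt19

section

variable {α : Type*} [DecidableEq α]

theorem card_filter_inter_eq_empty (s : Finset α) :
    #{p ∈ s.powerset ×ˢ s.powerset | p.1 ∩ p.2 = ∅} = 3 ^ #s := by
  have hfiber (A : Finset α) (hA : A ⊆ s) :
      #{B ∈ s.powerset | A ∩ B = ∅} = 1 ^ #A * 2 ^ (#s - #A) := by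
    have : {B ∈ s.powerset | A ∩ B = ∅} = (s \ A).powerset := by
      ext B
      simp only [mem_filter, mem_powerset, subset_sdiff, ← disjoint_iff_inter_eq_empty,
        disjoint_comm]
    rw [this, card_powerset, card_sdiff_of_subset hA, one_pow, one_mul]
  rw [show 3 = 1 + 2 by rfl, ← sum_pow_mul_eq_add_pow, card_filter, sum_product]
  refine sum_congr rfl fun A hA => ?_
  rw [← card_filter, hfiber A (mem_powerset.mp hA)]

theorem card_filter_inter_eq {s C : Finset α} (hC : C ⊆ s) :
    #{p ∈ s.powerset ×ˢ s.powerset | p.1 ∩ p.2 = C} = 3 ^ (#s - #C) := by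
  rw [← card_sdiff_of_subset hC, ← card_filter_inter_eq_empty]
  apply card_nbij' (fun p => (p.1 \ C, p.2 \ C)) (fun q => (q.1 ∪ C, q.2 ∪ C)) <;>
  · intro p hp
    simp only [coe_filter, mem_product, mem_powerset, Set.mem_ofPred_eq, Finset.ext_iff,
      Finset.subset_iff, mem_sdiff, mem_inter, mem_union, Prod.ext_iff, notMem_empty] at hp ⊢
    grind

theorem card_filter_card_inter_eq [Fintype α] (k : ℕ) :
    #{p : Finset α × Finset α | #(p.1 ∩ p.2) = k} =
      (Fintype.card α).choose k * 3 ^ (Fintype.card α - k) := by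
  have hmaps : ∀ p ∈ ({p | #(p.1 ∩ p.2) = k} : Finset (Finset α × Finset α)),
      p.1 ∩ p.2 ∈ univ.powersetCard k := fun p hp =>
    mem_powersetCard.mpr ⟨subset_univ _, (mem_filter.mp hp).2⟩
  rw [card_eq_sum_card_fiberwise hmaps, ← card_univ, ← card_powersetCard, ← smul_eq_mul,
    ← sum_const]
  refine sum_congr rfl fun C hC => ?_
  obtain ⟨-, rfl⟩ := mem_powersetCard.mp hC
  rw [filter_filter, ← card_filter_inter_eq (subset_univ C), powerset_univ, univ_product_univ]
  congr 1
  exact filter_congr fun p _ => ⟨And.right, fun h => ⟨congrArg card h, h⟩⟩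

end

theorem SimpleGraph.mem_of_reachable_fromEdgeSet {V : Type*} {s : Set (Sym2 V)} {S : Set V}
    (hS : ∀ x y, s(x, y) ∈ s → x ∈ S → y ∈ S) {x y : V}
    (h : (SimpleGraph.fromEdgeSet s).Reachable x y) (hx : x ∈ S) : y ∈ S := by
  rw [SimpleGraph.reachable_fromEdgeSet_eq_reflTransGen_toRel] at h
  induction h with
  | refl => exact hx
  | tail _ hxy ih => exact hS _ _ ((Sym2.toRel_prop _ _ _).mp hxy) ih

namespace Stmt19

variable {n : ℕ} {A B : Finset (Fin n)} {i j : Fin n}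

@[simp] lemma u_ne_v : u n ≠ v n := nofun
@[simp] lemma v_ne_u : v n ≠ u n := nofun
@[simp] lemma u_ne_m : u n ≠ m n i := nofun
@[simp] lemma m_ne_u : m n i ≠ u n := nofun
@[simp] lemma v_ne_m : v n ≠ m n i := nofun
@[simp] lemma m_ne_v : m n i ≠ v n := nofun
@[simp] lemma m_inj : m n i = m n j ↔ i = j := by simp [m]

def edgesOf (A B : Finset (Fin n)) : Finset (Sym2 (Vtx n)) :=
  A.image (fun i => s(u n, m n i)) ∪ B.image (fun i => s(m n i, v n))

def graphOf (A B : Finset (Fin n)) : SimpleGraph (Vtx n) :=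
  SimpleGraph.fromEdgeSet ↑(edgesOf A B)

lemma fromEdgeSet_edgesOf : SimpleGraph.fromEdgeSet ↑(edgesOf A B) = graphOf A B := rfl

lemma mem_edgesOf {e : Sym2 (Vtx n)} :
    e ∈ edgesOf A B ↔ (∃ i ∈ A, s(u n, m n i) = e) ∨ ∃ i ∈ B, s(m n i, v n) = e := by
  simp only [edgesOf, mem_union, mem_image]

@[simp] lemma u_m_mem_edgesOf : s(u n, m n i) ∈ edgesOf A B ↔ i ∈ A := by
  simp [edgesOf]

@[simp] lemma m_v_mem_edgesOf : s(m n i, v n) ∈ edgesOf A B ↔ i ∈ B := by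
  simp [edgesOf]

lemma adj_u_m (hi : i ∈ A) : (graphOf A B).Adj (u n) (m n i) := by
  simpa [graphOf] using hi

lemma adj_m_v (hi : i ∈ B) : (graphOf A B).Adj (m n i) (v n) := by
  simpa [graphOf] using hi

lemma reachable_u_v_iff : (graphOf A B).Reachable (u n) (v n) ↔ (A ∩ B).Nonempty := by
  refine ⟨fun h => ?_, fun ⟨i, hi⟩ => ?_⟩
  · by_contra hAB
    rw [not_nonempty_iff_eq_empty, ← disjoint_iff_inter_eq_empty, disjoint_left] at hAB
    have hv := SimpleGraph.mem_of_reachable_fromEdgeSet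
      (S := {x | x = u n ∨ ∃ i ∈ A, x = m n i}) ?_ h (Or.inl rfl)
    · simp at hv
    · -- an edge `m_j v` leaving `{u} ∪ m(A)` would need `j ∈ A ∩ B`
      intro x y hxy hx
      obtain ⟨j, hj, he⟩ | ⟨j, hj, he⟩ := mem_edgesOf.mp hxy <;>
        rcases Sym2.eq_iff.mp he with ⟨rfl, rfl⟩ | ⟨rfl, rfl⟩
      all_goals simp_all
  · rw [mem_inter] at hi
    exact (adj_u_m hi.1).reachable.trans (adj_m_v hi.2).reachable

lemma eq_of_reachable_m (hA : i ∉ A) (hB : i ∉ B) {x : Vtx n}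
    (h : (graphOf A B).Reachable (m n i) x) : x = m n i :=
  SimpleGraph.mem_of_reachable_fromEdgeSet (S := {m n i})
    (fun x y hxy hx => by
      rw [Set.mem_singleton_iff] at hx
      subst hx
      obtain ⟨j, hj, he⟩ | ⟨j, hj, he⟩ := mem_edgesOf.mp hxy <;>
        rcases Sym2.eq_iff.mp he with ⟨h1, h2⟩ | ⟨h1, h2⟩ <;> simp_all) h rfl

lemma edgesOf_erase_left : edgesOf (A.erase i) B = (edgesOf A B).erase s(u n, m n i) := by
  have hinj : Function.Injective fun j => s(u n, m n j) := fun _ _ h =>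
    m_inj.mp (Sym2.congr_right.mp h)
  rw [edgesOf, edgesOf, image_erase hinj, erase_union_distrib, erase_eq_of_notMem (s := B.image _)]
  simp

lemma edgesOf_erase_right : edgesOf A (B.erase i) = (edgesOf A B).erase s(m n i, v n) := by
  have hinj : Function.Injective fun j => s(m n j, v n) := fun _ _ h =>
    m_inj.mp (Sym2.congr_left.mp h)
  rw [edgesOf, edgesOf, image_erase hinj, erase_union_distrib, erase_eq_of_notMem (s := A.image _)]
  simp

lemma deleteEdges_graphOf (e : Sym2 (Vtx n)) :
    (graphOf A B).deleteEdges {e} = SimpleGraph.fromEdgeSet ↑((edgesOf A B).erase e) := by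
  rw [graphOf, SimpleGraph.deleteEdges_fromEdgeSet, coe_erase]

lemma not_isAcyclic_of_ne (hi : i ∈ A ∩ B) (hj : j ∈ A ∩ B) (hij : i ≠ j) :
    ¬ (graphOf A B).IsAcyclic := by
  rw [mem_inter] at hi hj
  intro hacyc
  apply hacyc (.cons (adj_u_m hi.1) (.cons (adj_m_v hi.2) (.cons (adj_m_v hj.2).symm
    (.cons (adj_u_m hj.1).symm .nil))))
  rw [SimpleGraph.Walk.cons_isCycle_iff]
  simp [hij]

/- After deleting an edge at `m_i`, either `m_i` is isolated, or it still hangs on one terminal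
while `A ∩ B` has become empty, so that it is cut off from the other terminal. -/
lemma isBridge_u_m (hAB : #(A ∩ B) ≤ 1) (hi : i ∈ A) :
    (graphOf A B).IsBridge s(u n, m n i) := by
  rw [SimpleGraph.isBridge_iff, deleteEdges_graphOf, ← edgesOf_erase_left]
  intro h
  by_cases hiB : i ∈ B
  · have hne := reachable_u_v_iff.mp (h.trans (adj_m_v hiB).reachable)
    rw [erase_inter, ← card_pos, card_erase_of_mem (mem_inter.mpr ⟨hi, hiB⟩)] at hne
    omega
  · exact u_ne_m (eq_of_reachable_m (notMem_erase i A) hiB h.symm)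

lemma isBridge_m_v (hAB : #(A ∩ B) ≤ 1) (hi : i ∈ B) :
    (graphOf A B).IsBridge s(m n i, v n) := by
  rw [SimpleGraph.isBridge_iff, deleteEdges_graphOf, ← edgesOf_erase_right]
  intro h
  by_cases hiA : i ∈ A
  · have hne := reachable_u_v_iff.mp ((adj_u_m hiA).reachable.trans h)
    rw [inter_erase, ← card_pos, card_erase_of_mem (mem_inter.mpr ⟨hiA, hi⟩)] at hne
    omega
  · exact v_ne_m (eq_of_reachable_m hiA (notMem_erase i B) h)

lemma isAcyclic_graphOf_iff : (graphOf A B).IsAcyclic ↔ #(A ∩ B) ≤ 1 := by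
  refine ⟨fun hacyc => card_le_one.mpr fun i hi j hj => ?_, fun hAB => ?_⟩
  · by_contra hij
    exact not_isAcyclic_of_ne hi hj hij hacyc
  · rw [SimpleGraph.isAcyclic_iff_forall_adj_isBridge]
    intro x y hxy
    rw [graphOf, SimpleGraph.fromEdgeSet_adj] at hxy
    obtain ⟨j, hj, he⟩ | ⟨j, hj, he⟩ := mem_edgesOf.mp hxy.1 <;> rw [← he]
    · exact isBridge_u_m hAB hj
    · exact isBridge_m_v hAB hj

lemma edgesOf_injective :
    Function.Injective fun p : Finset (Fin n) × Finset (Fin n) => edgesOf p.1 p.2 := by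
  intro p q h
  ext i <;> simp only at h
  · rw [← u_m_mem_edgesOf (B := p.2), h, u_m_mem_edgesOf]
  · rw [← m_v_mem_edgesOf (A := p.1), h, m_v_mem_edgesOf]

lemma edges_eq_edgesOf_univ : edges n = edgesOf univ univ := rfl

lemma powerset_edges_eq_image :
    (edges n).powerset =
      (univ : Finset (Finset (Fin n) × Finset (Fin n))).image fun p => edgesOf p.1 p.2 := by
  ext F
  simp only [mem_powerset, mem_image, mem_univ, true_and, edges_eq_edgesOf_univ]
  constructor
  · intro hF
    refine ⟨(univ.filter fun i => s(u n, m n i) ∈ F, univ.filter fun i => s(m n i, v n) ∈ F),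
      ?_⟩
    ext e
    refine ⟨fun he => ?_, fun he => ?_⟩
    · obtain ⟨i, -, rfl⟩ | ⟨i, -, rfl⟩ := mem_edgesOf.mp he <;> simpa using he
    · obtain ⟨i, -, rfl⟩ | ⟨i, -, rfl⟩ := mem_edgesOf.mp (hF he) <;> simpa using he
  · rintro ⟨p, rfl⟩
    exact union_subset_union (image_subset_image (subset_univ _))
      (image_subset_image (subset_univ _))

open Classical in
lemma card_filter_coe_powerset_edges [DecidableEq (Set (Sym2 (Vtx n)))]
    (P : Set (Sym2 (Vtx n)) → Prop) [DecidablePred P] :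
    #{F ∈ (edges n).powerset.image (↑) | P F} =
      #{p : Finset (Fin n) × Finset (Fin n) | P ↑(edgesOf p.1 p.2)} := by
  rw [powerset_edges_eq_image, image_image, filter_image,
    card_image_of_injective _ (coe_injective.comp edgesOf_injective)]
  rfl

lemma disconnCount_eq : disconnCount n = 3 ^ n := by
  classical
  -- the `Set`-valued forests in the definition are the `Finset`-monad image of the powerset
  rw [disconnCount, bind_pure_comp, fmap_def]
  simp only [card_filter_coe_powerset_edges, fromEdgeSet_edgesOf, isAcyclic_graphOf_iff,
    reachable_u_v_iff, ← card_pos]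
  convert card_filter_card_inter_eq (α := Fin n) 0 using 2
  · exact filter_congr fun p _ => by omega
  · simp

lemma connCount_eq : connCount n = n * 3 ^ (n - 1) := by
  classical
  rw [connCount, bind_pure_comp, fmap_def]
  simp only [card_filter_coe_powerset_edges, fromEdgeSet_edgesOf, isAcyclic_graphOf_iff,
    reachable_u_v_iff, ← card_pos]
  convert card_filter_card_inter_eq (α := Fin n) 1 using 2
  · exact filter_congr fun p _ => by omega
  all_goals simp

lemma forestCount_eq_add : forestCount n = disconnCount n + connCount n := by
  classical
  rw [forestCount, disconnCount, connCount, ← filter_filter, ← filter_filter, add_comm]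
  exact (card_filter_add_card_filter_not _).symm

lemma three_mul_forestCount : 3 * forestCount n = (n + 3) * 3 ^ n := by
  rw [forestCount_eq_add, disconnCount_eq, connCount_eq]
  cases n with
  | zero => rfl
  | succ k => rw [Nat.add_sub_cancel, pow_succ]; ring

lemma disconnCount_div_forestCount (n : ℕ) :
    (disconnCount n : ℝ) / forestCount n = 3 / (n + 3) := by
  have h : (3 : ℝ) * forestCount n = (n + 3) * 3 ^ n := by exact_mod_cast three_mul_forestCount
  have hF : (forestCount n : ℝ) ≠ 0 := by
    intro h0
    rw [h0, mul_zero] at h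
    exact (by positivity : (0 : ℝ) < (n + 3) * 3 ^ n).ne h
  rw [div_eq_div_iff hF (by positivity), disconnCount_eq]
  push_cast
  linarith

end Stmt19

open Stmt19 in
theorem stmt_19_general (n : ℕ) :
    disconnCount n = 3 ^ n ∧
    connCount n = n * 3 ^ (n - 1) ∧
    -- under the uniform distribution on forests, P[u, v in different components] = 3/(n+3)
    (disconnCount n : ℝ) / (forestCount n : ℝ) = 3 / ((n : ℝ) + 3) ∧
    -- and this probability tends to 0 as n → ∞
    Filter.Tendsto (fun N : ℕ => (disconnCount N : ℝ) / (forestCount N : ℝ))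
      Filter.atTop (nhds 0) := by
  refine ⟨disconnCount_eq, connCount_eq, disconnCount_div_forestCount n, ?_⟩
  simp_rw [disconnCount_div_forestCount]
  exact tendsto_const_nhds.div_atTop
    (Filter.tendsto_atTop_add_const_right _ 3 tendsto_natCast_atTop_atTop)

open Stmt19 in
theorem stmt_19 (n : ℕ) (hn : 1 ≤ n) :
    disconnCount n = 3 ^ n ∧
    connCount n = n * 3 ^ (n - 1) ∧
    -- under the uniform distribution on forests, P[u, v in different components] = 3/(n+3)
    (disconnCount n : ℝ) / (forestCount n : ℝ) = 3 / ((n : ℝ) + 3) ∧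
    -- and this probability tends to 0 as n → ∞
    Filter.Tendsto (fun N : ℕ => (disconnCount N : ℝ) / (forestCount N : ℝ))
      Filter.atTop (nhds 0) :=
  stmt_19_general n
end
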